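/- arXiv:math/0604276 — 11 statements merged into one kernel-verified Lean document; each statement's English description precedes it below -/
import Mathlib

section
/- Let q = (q_0, ..., q_5) ∈ ℤ^6 with q_0 + ... + q_5 = 0, q_0 ≤ q_1 ≤ ... ≤ q_5, and |q_2| ≤ q_3. Then q satisfies the positive curvature condition (i.e. there exists i_0 ∈ {0,...,5} such that q_i + q_j > 0 for all pairs i < j with i,j ≠ i_0, or q_i + q_j < 0 for all such pairs) if and only if q_1 + q_2 > 0. -/
/-- The `k`-th elementary symmetric polynomial of the tuple `q`. -/
def esymm {n : ℕ} (k : ℕ) (q : Fin n → ℤ) : ℤ :=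
  ∑ t ∈ Finset.univ.powersetCard k, ∏ i ∈ t, q i

/-- The Bazaikin freeness condition: the entries sum to zero, all entries are odd,
and `gcd (q a + q b, q c + q d) = 2` for all pairwise distinct indices `a b c d`. -/
def BazaikinFree (q : Fin 6 → ℤ) : Prop :=
  (∑ i, q i) = 0 ∧ (∀ i, Odd (q i)) ∧
    ∀ a b c d : Fin 6, a ≠ b → a ≠ c → a ≠ d → b ≠ c → b ≠ d → c ≠ d →
      Int.gcd (q a + q b) (q c + q d) = 2

/-- The positive curvature condition: there is an index `i₀` such that
`q i + q j > 0` for all pairs `i < j` avoiding `i₀`, or `q i + q j < 0` for all such pairs. -/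
def PosCurv (q : Fin 6 → ℤ) : Prop :=
  ∃ i₀ : Fin 6,
    (∀ i j : Fin 6, i < j → i ≠ i₀ → j ≠ i₀ → 0 < q i + q j) ∨
    (∀ i j : Fin 6, i < j → i ≠ i₀ → j ≠ i₀ → q i + q j < 0)

/-!
Removing one index from three still leaves a pair. For sorted `q`, every pair inside `{0, 1, 2}`
has sum at most `q 1 + q 2`, and every pair inside `{3, 4, 5}` has sum at least `2 q 3 ≥ 0`,
so neither alternative of `PosCurv` can hold once `q 1 + q 2 ≤ 0`. Conversely, if
`q 1 + q 2 > 0`, then `i₀ = 0` works, since every pair avoiding `0` dominates `(1, 2)`.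
-/

theorem exists_pair_avoiding {α : Type*} [LinearOrder α] {a b c : α} (hab : a < b) (hbc : b < c)
    (x : α) : ∃ i j, a ≤ i ∧ i < j ∧ j ≤ c ∧ i ≠ x ∧ j ≠ x := by
  by_cases hxa : x = a
  · subst hxa
    exact ⟨b, c, hab.le, hbc, le_rfl, hab.ne', (hab.trans hbc).ne'⟩
  by_cases hxb : x = b
  · subst hxb
    exact ⟨a, c, le_rfl, hab.trans hbc, le_rfl, hab.ne, hbc.ne'⟩
  exact ⟨a, b, le_rfl, hab, hbc.le, Ne.symm hxa, Ne.symm hxb⟩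

section Sorted

variable {q : Fin 6 → ℤ} (hmono : Monotone q)
include hmono

theorem posCurv_of_pos_add (h : 0 < q 1 + q 2) : PosCurv q := by
  refine ⟨0, Or.inl fun i j hij hi _ => ?_⟩
  have h1i : 1 ≤ i := Fin.one_le_of_ne_zero hi
  have h2j : 2 ≤ j := by omega
  linarith [hmono h1i, hmono h2j]

theorem not_forall_pos_of_add_nonpos (h : q 1 + q 2 ≤ 0) (i₀ : Fin 6) :
    ¬ ∀ i j : Fin 6, i < j → i ≠ i₀ → j ≠ i₀ → 0 < q i + q j := by
  intro hpos
  obtain ⟨i, j, -, hij, hj, hi, hj₀⟩ := exists_pair_avoiding (a := 0) (b := 1) (c := 2)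
    (by decide) (by decide) i₀
  have hi1 : i ≤ 1 := by omega
  linarith [hpos i j hij hi hj₀, hmono hi1, hmono hj]

theorem not_forall_neg_of_nonneg (h : 0 ≤ q 3) (i₀ : Fin 6) :
    ¬ ∀ i j : Fin 6, i < j → i ≠ i₀ → j ≠ i₀ → q i + q j < 0 := by
  intro hneg
  obtain ⟨i, j, hi, hij, -, hi₀, hj₀⟩ := exists_pair_avoiding (a := 3) (b := 4) (c := 5)
    (by decide) (by decide) i₀
  linarith [hneg i j hij hi₀ hj₀, hmono hi, hmono (hi.trans hij.le)]

end Sorted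

theorem posCurv_iff_of_sorted_general (q : Fin 6 → ℤ)
    (hmono : Monotone q) (habs : |q 2| ≤ q 3) :
    PosCurv q ↔ 0 < q 1 + q 2 := by
  refine ⟨?_, posCurv_of_pos_add hmono⟩
  rintro ⟨i₀, hpos | hneg⟩
  · by_contra h
    exact not_forall_pos_of_add_nonpos hmono (not_lt.mp h) i₀ hpos
  · exact (not_forall_neg_of_nonneg hmono ((abs_nonneg _).trans habs) i₀ hneg).elim

theorem posCurv_iff_of_sorted (q : Fin 6 → ℤ) (hsum : (∑ i, q i) = 0)
    (hmono : Monotone q) (habs : |q 2| ≤ q 3) :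
    PosCurv q ↔ 0 < q 1 + q 2 :=
  posCurv_iff_of_sorted_general q hmono habs
end

section
/- For every positive integer s, the set of tuples q = (q_0, ..., q_5) ∈ ℤ^6 satisfying the Bazaikin freeness condition, the positive curvature condition, and |σ_3(q)| = 8s, is finite. (This is the arithmetic content of Corollary C(i): there are only finitely many positively curved Bazaikin spaces with a given cohomology ring, since H^6(B_q) = ℤ_s with 8s = |σ_3(q)|.) -/
theorem Multiset.esymm_cons {R : Type*} [CommSemiring R] (a : R) (s : Multiset R) (k : ℕ) :
    (a ::ₘ s).esymm (k + 1) = a * s.esymm k + s.esymm (k + 1) := by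
  simp [Multiset.esymm, Multiset.sum_map_mul_left, add_comm]

section esymm

variable {n : ℕ}

theorem esymm_eq_multiset_esymm (k : ℕ) (q : Fin n → ℤ) :
    esymm k q = (Finset.univ.val.map q).esymm k :=
  (Finset.esymm_map_val q _ k).symm

theorem esymm_zero (q : Fin n → ℤ) : esymm 0 q = 1 := by
  simp [esymm]

theorem esymm_succ_fin_zero (k : ℕ) (q : Fin 0 → ℤ) : esymm (k + 1) q = 0 := by
  rw [esymm, Finset.univ_eq_empty, Finset.powersetCard_eq_empty.mpr (by simp), Finset.sum_empty]

theorem esymm_succ (k : ℕ) (q : Fin (n + 1) → ℤ) :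
    esymm (k + 1) q = q 0 * esymm k (Fin.tail q) + esymm (k + 1) (Fin.tail q) := by
  rw [esymm_eq_multiset_esymm, Fin.univ_val_map, List.ofFn_succ, ← Multiset.cons_coe,
    Multiset.esymm_cons, esymm_eq_multiset_esymm, esymm_eq_multiset_esymm, Fin.univ_val_map]
  rfl

theorem esymm_comp_perm (k : ℕ) (q : Fin n → ℤ) (σ : Equiv.Perm (Fin n)) :
    esymm k (q ∘ σ) = esymm k q := by
  rw [esymm_eq_multiset_esymm, esymm_eq_multiset_esymm, ← Multiset.map_map,
    Multiset.map_univ_val_equiv]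

theorem esymm_neg (k : ℕ) (q : Fin n → ℤ) : esymm k (-q) = (-1) ^ k * esymm k q := by
  rw [esymm_eq_multiset_esymm, esymm_eq_multiset_esymm, ← Multiset.esymm_neg, Multiset.map_map]
  rfl

end esymm

section FiveTerms

variable {b : Fin 5 → ℤ}

theorem sum_le_sum_mul_esymm_two_sub_esymm_three_of_pos (h : ∀ i j, i ≠ j → 0 < b i + b j)
    (h3 : 0 < b 3) (h4 : 0 < b 4) :
    ∑ i, b i ≤ (∑ i, b i) * esymm 2 b - esymm 3 b := by
  have key : (∑ i, b i) * esymm 2 b - esymm 3 b =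
      (b 0 + b 1) * (b 1 + b 2) * (b 2 + b 0) + b 3 * (b 0 + b 1 + b 2) * (b 0 + b 1 + b 2 + b 3)
        + b 4 * (b 0 + b 1 + b 2 + b 3) * ∑ i, b i := by
    simp only [esymm_succ, esymm_zero, esymm_succ_fin_zero, Fin.tail, Fin.sum_univ_five,
      Fin.succ_zero_eq_one, Fin.succ_one_eq_two, Fin.reduceSucc]
    ring
  have h01 := h 0 1 (by decide)
  have h12 := h 1 2 (by decide)
  have h20 := h 2 0 (by decide)
  have hP4 : 0 < b 0 + b 1 + b 2 + b 3 := by linarith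
  have hS : 0 < ∑ i, b i := by rw [Fin.sum_univ_five]; linarith
  have hTriangle : 0 < (b 0 + b 1) * (b 1 + b 2) * (b 2 + b 0) := by positivity
  have hMiddle : 0 ≤ b 3 * (b 0 + b 1 + b 2) * (b 0 + b 1 + b 2 + b 3) := by
    have : 0 < b 0 + b 1 + b 2 := by linarith
    positivity
  have hLast : ∑ i, b i ≤ b 4 * (b 0 + b 1 + b 2 + b 3) * ∑ i, b i :=
    le_mul_of_one_le_left hS.le (one_le_mul_of_one_le_of_one_le h4 hP4)
  linarith

theorem sum_le_sum_mul_esymm_two_sub_esymm_three (h : ∀ i j, i ≠ j → 0 < b i + b j) :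
    ∑ i, b i ≤ (∑ i, b i) * esymm 2 b - esymm 3 b := by
  suffices ∃ σ : Equiv.Perm (Fin 5), 0 < b (σ 3) ∧ 0 < b (σ 4) by
    obtain ⟨σ, h3, h4⟩ := this
    have := sum_le_sum_mul_esymm_two_sub_esymm_three_of_pos (b := b ∘ σ)
      (fun i j hij ↦ h _ _ (σ.injective.ne hij)) h3 h4
    rwa [esymm_comp_perm, esymm_comp_perm, Function.comp_def, Equiv.sum_comp] at this
  -- At most one entry is nonpositive; a transposition moves it to position `0`.
  have h03 := h 0 3 (by decide)
  have h04 := h 0 4 (by decide)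
  have h34 := h 3 4 (by decide)
  by_cases h3 : 0 < b 3
  · by_cases h4 : 0 < b 4
    · exact ⟨1, h3, h4⟩
    · refine ⟨Equiv.swap 0 4, ?_, ?_⟩
      · rwa [Equiv.swap_apply_of_ne_of_ne (by decide) (by decide)]
      · rw [Equiv.swap_apply_right]; linarith
  · refine ⟨Equiv.swap 0 3, ?_, ?_⟩
    · rw [Equiv.swap_apply_right]; linarith
    · rw [Equiv.swap_apply_of_ne_of_ne (by decide) (by decide)]; linarith

theorem abs_le_sum_of_pairwise_pos (h : ∀ i j, i ≠ j → 0 < b i + b j) (i : Fin 5) :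
    |b i| ≤ ∑ j, b j := by
  rw [Fin.sum_univ_five, abs_le]
  fin_cases i <;> simp only [Fin.zero_eta, Fin.mk_one, Fin.reduceFinMk] <;> constructor <;>
    linarith [h 0 1 (by decide), h 0 2 (by decide), h 0 3 (by decide), h 0 4 (by decide),
      h 1 2 (by decide), h 1 3 (by decide), h 1 4 (by decide), h 2 3 (by decide),
      h 2 4 (by decide), h 3 4 (by decide)]

end FiveTerms

theorem abs_le_neg_esymm_three_of_pairwise_pos_off_zero {q : Fin 6 → ℤ} (hsum : ∑ i, q i = 0)
    (h : ∀ i j, i ≠ j → i ≠ 0 → j ≠ 0 → 0 < q i + q j) (i : Fin 6) :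
    |q i| ≤ -esymm 3 q := by
  set b := Fin.tail q
  have hb : ∀ i j, i ≠ j → 0 < b i + b j := fun i j hij ↦
    h _ _ (Fin.succ_injective _ |>.ne hij) (Fin.succ_ne_zero _) (Fin.succ_ne_zero _)
  have hq₀ : q 0 = -∑ j, b j := by
    rw [Fin.sum_univ_succ] at hsum
    exact eq_neg_of_add_eq_zero_left hsum
  have hT : -esymm 3 q = (∑ j, b j) * esymm 2 b - esymm 3 b := by
    rw [esymm_succ, hq₀]
    ring
  rw [hT]
  refine le_trans ?_ (sum_le_sum_mul_esymm_two_sub_esymm_three hb)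
  cases i using Fin.cases with
  | zero =>
    rw [hq₀, abs_neg, abs_of_nonneg ((abs_nonneg _).trans (abs_le_sum_of_pairwise_pos hb 0))]
  | succ j => exact abs_le_sum_of_pairwise_pos hb j

theorem abs_le_abs_esymm_three_of_pairwise_pos {q : Fin 6 → ℤ} (hsum : ∑ i, q i = 0) (i₀ : Fin 6)
    (h : ∀ i j, i < j → i ≠ i₀ → j ≠ i₀ → 0 < q i + q j) (i : Fin 6) :
    |q i| ≤ |esymm 3 q| := by
  set σ := Equiv.swap 0 i₀
  have hσ : ∀ j, j ≠ 0 → σ j ≠ i₀ := fun j hj ↦ by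
    rwa [Ne, Equiv.swap_apply_eq_iff, Equiv.swap_apply_right]
  have := abs_le_neg_esymm_three_of_pairwise_pos_off_zero (q := q ∘ σ)
    (by rwa [Function.comp_def, Equiv.sum_comp])
    (fun j k hjk hj hk ↦ by
      rcases (σ.injective.ne hjk).lt_or_gt with hlt | hlt
      · exact h _ _ hlt (hσ j hj) (hσ k hk)
      · exact add_comm (q (σ k)) _ ▸ h _ _ hlt (hσ k hk) (hσ j hj))
    (σ i)
  rw [esymm_comp_perm, Function.comp_apply, Equiv.swap_apply_self] at this
  exact this.trans (neg_le_abs _)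

theorem abs_le_abs_esymm_three {q : Fin 6 → ℤ} (hsum : ∑ i, q i = 0) (hq : PosCurv q)
    (i : Fin 6) : |q i| ≤ |esymm 3 q| := by
  obtain ⟨i₀, hpos | hneg⟩ := hq
  · exact abs_le_abs_esymm_three_of_pairwise_pos hsum i₀ hpos i
  · have := abs_le_abs_esymm_three_of_pairwise_pos (q := -q)
      (by simp [Finset.sum_neg_distrib, hsum]) i₀
      (fun j k hjk hj hk ↦ by simp only [Pi.neg_apply]; linarith [hneg j k hjk hj hk]) i
    rwa [esymm_neg, Pi.neg_apply, abs_neg, abs_mul, abs_pow, abs_neg, abs_one, one_pow,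
      one_mul] at this

theorem finitely_many_posCurved_Bazaikin_with_given_order_general (s : ℕ) :
    {q : Fin 6 → ℤ | BazaikinFree q ∧ PosCurv q ∧ |esymm 3 q| = 8 * (s : ℤ)}.Finite := by
  refine (Set.Finite.pi fun _ : Fin 6 ↦ Set.finite_Icc (-(8 * s : ℤ)) (8 * s)).subset ?_
  rintro q ⟨⟨hsum, -, -⟩, hq, hσ₃⟩ i -
  exact abs_le.mp (hσ₃ ▸ abs_le_abs_esymm_three hsum hq i)

theorem finitely_many_posCurved_Bazaikin_with_given_order (s : ℕ) (hs : 0 < s) :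
    {q : Fin 6 → ℤ | BazaikinFree q ∧ PosCurv q ∧ |esymm 3 q| = 8 * (s : ℤ)}.Finite :=
  finitely_many_posCurved_Bazaikin_with_given_order_general s
end

section
/- Let q = (q_0, ..., q_5) ∈ ℤ^6 satisfy the Bazaikin freeness condition. Then the number of indices i ∈ {0,...,5} with q_i ≡ 1 (mod 4) is either 1 or 5; equivalently, up to reordering and an overall sign change, q ≡ (1,1,1,1,1,−1) (mod 4). -/
theorem Int.gcd_ne_two_of_four_dvd {x y : ℤ} (hx : 4 ∣ x) (hy : 4 ∣ y) : Int.gcd x y ≠ 2 := by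
  intro h
  have := Int.dvd_coe_gcd hx hy
  rw [h] at this
  norm_num at this

theorem Int.emod_four_eq_one_or_three_of_odd {x : ℤ} (hx : Odd x) : x % 4 = 1 ∨ x % 4 = 3 := by
  have := Int.odd_iff.1 hx
  omega

/-- Each odd entry contributes `1` or `3` to the sum of residues. -/
theorem Finset.sum_emod_four_of_odd {ι : Type*} (s : Finset ι) (f : ι → ℤ)
    (hf : ∀ i ∈ s, Odd (f i)) :
    ∑ i ∈ s, f i % 4 = 3 * s.card - 2 * (s.filter (fun i => f i % 4 = 1)).card := by
  have hterm : ∀ i ∈ s, f i % 4 = 3 - 2 * (if f i % 4 = 1 then 1 else 0) := by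
    intro i hi
    rcases Int.emod_four_eq_one_or_three_of_odd (hf i hi) with h | h <;> simp [h]
  rw [Finset.sum_congr rfl hterm, Finset.sum_sub_distrib, ← Finset.mul_sum, Finset.sum_boole]
  simp [mul_comm]

namespace BazaikinFree

variable {q : Fin 6 → ℤ}

theorem odd_card_filter_emod_four_eq_one (h : BazaikinFree q) :
    Odd (Finset.univ.filter (fun i : Fin 6 => q i % 4 = 1)).card := by
  obtain ⟨hsum, hodd, -⟩ := h
  have hres := Finset.sum_emod_four_of_odd Finset.univ q (fun i _ => hodd i)
  have h4 : (∑ i, q i % 4) % 4 = 0 := by rw [← Finset.sum_int_mod, hsum]; rfl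
  rw [hres, Finset.card_univ, Fintype.card_fin] at h4
  rw [Nat.odd_iff]
  omega

/-- Two disjoint pairs, each made of a residue `1` and a residue `3`, would both have sums
divisible by `4`. -/
theorem card_filter_emod_four_eq_one_le_one_or_card_compl_le_one (h : BazaikinFree q) :
    (Finset.univ.filter (fun i : Fin 6 => q i % 4 = 1)).card ≤ 1 ∨
      (Finset.univ.filter (fun i : Fin 6 => q i % 4 = 1))ᶜ.card ≤ 1 := by
  obtain ⟨-, hodd, hgcd⟩ := h
  by_contra! hbig
  obtain ⟨a, ha, c, hc, hac⟩ := Finset.one_lt_card.1 hbig.1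
  obtain ⟨b, hb, d, hd, hbd⟩ := Finset.one_lt_card.1 hbig.2
  simp only [Finset.mem_compl, Finset.mem_filter, Finset.mem_univ, true_and] at ha hb hc hd
  have hthree : ∀ i, q i % 4 ≠ 1 → q i % 4 = 3 := fun i hi =>
    (Int.emod_four_eq_one_or_three_of_odd (hodd i)).resolve_left hi
  have hb3 := hthree b hb
  have hd3 := hthree d hd
  refine Int.gcd_ne_two_of_four_dvd (x := q a + q b) (y := q c + q d) (by omega) (by omega)
    (hgcd a b c d ?_ ?_ ?_ ?_ hbd ?_) <;> rintro rfl <;> omega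

end BazaikinFree

theorem residues_mod_four (q : Fin 6 → ℤ) (h : BazaikinFree q) :
    (Finset.univ.filter (fun i : Fin 6 => q i % 4 = 1)).card = 1 ∨
    (Finset.univ.filter (fun i : Fin 6 => q i % 4 = 1)).card = 5 := by
  have hodd := Nat.odd_iff.1 h.odd_card_filter_emod_four_eq_one
  have hsmall := h.card_filter_emod_four_eq_one_le_one_or_card_compl_le_one
  rw [Finset.card_compl, Fintype.card_fin] at hsmall
  have hle := Finset.card_le_univ (Finset.univ.filter (fun i : Fin 6 => q i % 4 = 1))
  rw [Fintype.card_fin] at hle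
  omega
end

section
/- Let q = (q_0, ..., q_5) ∈ ℤ^6 satisfy the Bazaikin freeness condition. Then −σ_2(q) ≡ 7 (mod 8); equivalently, (1/2)(q_0^2 + ... + q_5^2) ≡ 7 (mod 8). (This is the mod 8 part of the statement that the first Pontryagin class p_1 = −σ_2(q) of a Bazaikin space satisfies p_1 ≡ 7 or 15 mod 24.) -/
/-!
Since `∑ qᵢ = 0`, Newton's identity gives `-2 σ₂(q) = ∑ qᵢ²`, so it suffices to show
`∑ qᵢ² ≡ 14 (mod 16)`. For odd `x` one has `x² ≡ 2x - 1 (mod 16)` if `x ≡ 1 (mod 4)` and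
`x² ≡ 2x + 3 (mod 16)` if `x ≡ 3 (mod 4)`, hence `∑ qᵢ² ≡ 4m - 6 (mod 16)` where `m` counts the
`qᵢ ≡ 3 (mod 4)`. Two disjoint pairs, each with one entry `≡ 1` and one `≡ 3 (mod 4)`, would have
both pair sums divisible by `4`, against the gcd condition; so `m ∈ {0, 1, 5, 6}`. Finally
`0 = ∑ qᵢ ≡ 6 + 2m (mod 4)` makes `m` odd, so `m ≡ 1 (mod 4)`.
-/

open Finset

theorem two_mul_esymm_two {n : ℕ} (q : Fin n → ℤ) :
    2 * esymm 2 q = (∑ i, q i) ^ 2 - ∑ i, q i ^ 2 := by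
  have newton := congrArg (MvPolynomial.eval q) (MvPolynomial.mul_esymm_eq_sum (Fin n) ℤ 2)
  rw [show {a ∈ antidiagonal 2 | a.1 < 2} = {(0, 2), (1, 1)} by decide] at newton
  simpa [MvPolynomial.esymm, MvPolynomial.psum, esymm, powersetCard_one, sq, sub_eq_add_neg]
    using newton

theorem Int.sq_modEq_sixteen_of_odd {x : ℤ} (hx : Odd x) :
    x ^ 2 ≡ 2 * x - 1 + 4 * if x % 4 = 3 then 1 else 0 [ZMOD 16] := by
  obtain ⟨k, rfl⟩ := hx
  by_cases h : (2 * k + 1) % 4 = 3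
  · obtain ⟨m, rfl⟩ : ∃ m, k = 2 * m + 1 := ⟨k / 2, by omega⟩
    rw [if_pos h]
    exact Int.modEq_iff_dvd.2 ⟨-m ^ 2 - m, by ring⟩
  · obtain ⟨m, rfl⟩ : ∃ m, k = 2 * m := ⟨k / 2, by omega⟩
    rw [if_neg h]
    exact Int.modEq_iff_dvd.2 ⟨-m ^ 2, by ring⟩

theorem Int.modEq_four_of_odd {x : ℤ} (hx : Odd x) :
    x ≡ 1 + 2 * if x % 4 = 3 then 1 else 0 [ZMOD 4] := by
  obtain ⟨k, rfl⟩ := hx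
  split_ifs <;> simp only [Int.ModEq] <;> omega

section OddFamily

variable {ι : Type*} [Fintype ι] {q : ι → ℤ}

theorem sum_sq_modEq_sixteen_of_odd (hq : ∀ i, Odd (q i)) :
    ∑ i, q i ^ 2 ≡ 2 * ∑ i, q i - Fintype.card ι + 4 * #{i | q i % 4 = 3} [ZMOD 16] := by
  have hsum : ∑ i, (2 * q i - 1 + 4 * if q i % 4 = 3 then 1 else 0) =
      2 * ∑ i, q i - Fintype.card ι + 4 * #{i | q i % 4 = 3} := by
    simp only [sum_add_distrib, sum_sub_distrib, ← mul_sum, sum_boole, sum_const, card_univ]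
    simp
  exact hsum ▸ Int.ModEq.sum fun i _ => Int.sq_modEq_sixteen_of_odd (hq i)

theorem sum_modEq_four_of_odd (hq : ∀ i, Odd (q i)) :
    ∑ i, q i ≡ Fintype.card ι + 2 * #{i | q i % 4 = 3} [ZMOD 4] := by
  have hsum : ∑ i, ((1 : ℤ) + 2 * if q i % 4 = 3 then 1 else 0) =
      Fintype.card ι + 2 * #{i | q i % 4 = 3} := by
    simp only [sum_add_distrib, ← mul_sum, sum_boole, sum_const, card_univ]
    simp
  exact hsum ▸ Int.ModEq.sum fun i _ => Int.modEq_four_of_odd (hq i)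

end OddFamily

theorem BazaikinFree.card_le_one_or_five_le_card {q : Fin 6 → ℤ} (h : BazaikinFree q) :
    #{i | q i % 4 = 3} ≤ 1 ∨ 5 ≤ #{i | q i % 4 = 3} := by
  obtain ⟨-, hodd, hgcd⟩ := h
  set S : Finset (Fin 6) := {i | q i % 4 = 3}
  have four_dvd_add {x y : Fin 6} (hx : x ∈ S) (hy : y ∉ S) : 4 ∣ q x + q y := by
    simp only [S, mem_filter_univ] at hx hy
    obtain ⟨k, hk⟩ := hodd y
    omega
  by_contra! hmid
  obtain ⟨a, ha, c, hc, hac⟩ := one_lt_card.1 hmid.1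
  have hSc : 1 < #Sᶜ := by
    rw [card_compl, Fintype.card_fin]
    omega
  obtain ⟨b, hb, d, hd, hbd⟩ := one_lt_card.1 hSc
  rw [mem_compl] at hb hd
  have h4 := Int.dvd_coe_gcd (four_dvd_add ha hb) (four_dvd_add hc hd)
  rw [hgcd a b c d (ne_of_mem_of_not_mem ha hb) hac (ne_of_mem_of_not_mem ha hd)
    (ne_of_mem_of_not_mem hc hb).symm hbd (ne_of_mem_of_not_mem hc hd)] at h4
  norm_num at h4

theorem p1_mod_eight (q : Fin 6 → ℤ) (h : BazaikinFree q) :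
    -esymm 2 q ≡ 7 [ZMOD 8] := by
  have hcard := h.card_le_one_or_five_le_card
  have hcard_le : #{i | q i % 4 = 3} ≤ 6 := card_le_univ _
  obtain ⟨hsum, hodd, -⟩ := h
  have hsq := sum_sq_modEq_sixteen_of_odd hodd
  have hlin := sum_modEq_four_of_odd hodd
  have hesymm := two_mul_esymm_two q
  simp only [hsum, Int.ModEq, Fintype.card_fin] at *
  omega
end

section
/- Let q = (q_0, ..., q_5) ∈ ℤ^6 satisfy the Bazaikin freeness condition. Then, up to reordering the entries and replacing q by −q, the reduction of q modulo 3 equals (1,1,1,1,1,1), (1,1,1,0,0,0), or (1,1,1,1,2,0). -/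
/-!
Reduce modulo 3 and let n₀, n₁, n₂ count the entries with residue 0, 1, 2. Since
gcd (q_a + q_b, q_c + q_d) = 2 is prime to 3, no two disjoint pairs of entries both have
residue sum 0. Such pairs are the pairs of zeros and the pairs {1, 2}, so n₀ ≤ 3,
n₁ n₂ = 0 as soon as n₀ ≥ 2, and min (n₁, n₂) ≤ 1. Replacing q by -q swaps n₁ and n₂, so
we may assume n₂ ≤ n₁; together with n₀ + n₁ + n₂ = 6 and n₁ ≡ n₂ (mod 3), which is
Σ q_i = 0 read modulo 3, this leaves (n₀, n₁, n₂) ∈ {(0, 6, 0), (3, 3, 0), (1, 4, 1)},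
the residue counts of the three patterns.
-/

open Finset

theorem exists_perm_apply_eq_of_card_fiber_eq {ι α : Type*} [Fintype ι] [DecidableEq α]
    {f g : ι → α} (h : ∀ c, #{i | f i = c} = #{i | g i = c}) :
    ∃ σ : Equiv.Perm ι, ∀ i, f (σ i) = g i :=
  ⟨Equiv.ofFiberEquiv fun c => Fintype.equivOfCardEq <| by
      simpa only [Fintype.card_subtype] using (h c).symm,
    Equiv.ofFiberEquiv_map _⟩

section ZeroSumPairs

variable {ι G : Type*} {x : ι → G}

def ZeroSumPairsIntersect [Add G] [Zero G] (x : ι → G) : Prop :=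
  ∀ a b c d, a ≠ b → a ≠ c → a ≠ d → b ≠ c → b ≠ d → c ≠ d → x a + x b = 0 → x c + x d ≠ 0

variable [Fintype ι] [DecidableEq G]

theorem ZeroSumPairsIntersect.card_fiber_zero_le [AddZeroClass G]
    (hx : ZeroSumPairsIntersect x) : #{i | x i = 0} ≤ 3 := by
  classical
  by_contra! h
  obtain ⟨a, ha⟩ := card_pos.mp (show 0 < #{i | x i = 0} by omega)
  obtain ⟨b, c, d, hb, hc, hd, hbc, hbd, hcd⟩ :=
    two_lt_card_iff.mp (show 2 < #(({i | x i = 0} : Finset ι).erase a) by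
      rw [card_erase_of_mem ha]; omega)
  simp only [mem_erase, mem_filter, mem_univ, true_and] at ha hb hc hd
  exact hx a b c d hb.1.symm hc.1.symm hd.1.symm hbc hbd hcd (by simp [ha, hb.2])
    (by simp [hc.2, hd.2])

variable [AddGroup G] {r : G}

theorem ZeroSumPairsIntersect.card_fiber_eq_zero_or_of_two_le (hx : ZeroSumPairsIntersect x)
    (hr : r ≠ -r) (h0 : 2 ≤ #{i | x i = 0}) :
    #{i | x i = r} = 0 ∨ #{i | x i = -r} = 0 := by
  by_contra! h
  obtain ⟨⟨c, hc⟩, ⟨d, hd⟩⟩ := And.intro (card_pos.mp (Nat.pos_of_ne_zero h.1))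
    (card_pos.mp (Nat.pos_of_ne_zero h.2))
  obtain ⟨a, b, ha, hb, hab⟩ := one_lt_card_iff.mp (show 1 < #{i | x i = 0} by omega)
  simp only [mem_filter, mem_univ, true_and] at ha hb hc hd
  have hr0 : r ≠ 0 := fun h => hr (by simp [h])
  refine hx a b c d hab ?_ ?_ ?_ ?_ ?_ (by simp [ha, hb]) (by simp [hc, hd]) <;>
    rintro rfl <;> simp_all [eq_comm]

theorem ZeroSumPairsIntersect.card_fiber_le_one_or (hx : ZeroSumPairsIntersect x)
    (hr : r ≠ -r) : #{i | x i = r} ≤ 1 ∨ #{i | x i = -r} ≤ 1 := by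
  by_contra! h
  obtain ⟨a, c, ha, hc, hac⟩ := one_lt_card_iff.mp h.1
  obtain ⟨b, d, hb, hd, hbd⟩ := one_lt_card_iff.mp h.2
  simp only [mem_filter, mem_univ, true_and] at ha hb hc hd
  refine hx a b c d ?_ hac ?_ ?_ hbd ?_ (by simp [ha, hb]) (by simp [hc, hd]) <;>
    rintro rfl <;> simp_all

end ZeroSumPairs

section ResidueCounts

variable {ι : Type*} [Fintype ι]

theorem ZMod.sum_univ_three {M : Type*} [AddCommMonoid M] (f : ZMod 3 → M) :
    ∑ r, f r = f 0 + f 1 + f 2 :=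
  Fin.sum_univ_three f

def residueCounts (x : ι → ZMod 3) : ℕ × ℕ × ℕ :=
  (#{i | x i = 0}, #{i | x i = 1}, #{i | x i = 2})

theorem residueCounts_neg (x : ι → ZMod 3) :
    residueCounts (fun i => -x i) =
      ((residueCounts x).1, (residueCounts x).2.2, (residueCounts x).2.1) := by
  simp only [residueCounts, neg_eq_iff_eq_neg, neg_zero,
    show (-1 : ZMod 3) = 2 by decide, show (-2 : ZMod 3) = 1 by decide]

theorem card_fiber_zero_add_card_fiber_one_add_card_fiber_two (x : ι → ZMod 3) :
    #{i | x i = 0} + #{i | x i = 1} + #{i | x i = 2} = Fintype.card ι := by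
  rw [← ZMod.sum_univ_three fun r => #{i | x i = r}, ← card_univ,
    card_eq_sum_card_fiberwise (f := x) (t := univ) (by simp)]

theorem sum_eq_card_fiber_one_sub_card_fiber_two (x : ι → ZMod 3) :
    ∑ i, x i = #{i | x i = 1} - #{i | x i = 2} :=
  calc ∑ i, x i = ∑ r, ∑ i with x i = r, r := (sum_fiberwise' univ x id).symm
    _ = #{i | x i = 1} + #{i | x i = 2} * 2 := by
      simp only [sum_const, ZMod.sum_univ_three, nsmul_eq_mul]; ring
    _ = #{i | x i = 1} - #{i | x i = 2} := by
      rw [show (2 : ZMod 3) = -1 by decide]; ring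

theorem residueCounts_eq_of_zeroSumPairsIntersect {x : ι → ZMod 3}
    (hι : Fintype.card ι = 6) (hsum : ∑ i, x i = 0) (hx : ZeroSumPairsIntersect x)
    (h21 : (residueCounts x).2.2 ≤ (residueCounts x).2.1) :
    residueCounts x = (0, 6, 0) ∨ residueCounts x = (3, 3, 0) ∨
      residueCounts x = (1, 4, 1) := by
  have hr : (1 : ZMod 3) ≠ -1 := by decide
  have h3 : ((3 : ℕ) : ℤ) ∣ #{i | x i = 1} - #{i | x i = 2} := by
    rw [← ZMod.intCast_zmod_eq_zero_iff_dvd]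
    push_cast
    rw [← sum_eq_card_fiber_one_sub_card_fiber_two, hsum]
  have h6 := card_fiber_zero_add_card_fiber_one_add_card_fiber_two x
  have h0 := hx.card_fiber_zero_le
  have h012 := hx.card_fiber_eq_zero_or_of_two_le hr
  have h12 := hx.card_fiber_le_one_or hr
  simp only [residueCounts, Prod.mk.injEq, show (-1 : ZMod 3) = 2 by decide] at *
  omega

theorem exists_perm_modEq_of_residueCounts_eq {q p : ι → ℤ}
    (h : residueCounts (fun i => (q i : ZMod 3)) = residueCounts (fun i => (p i : ZMod 3))) :
    ∃ σ : Equiv.Perm ι, ∀ i, q (σ i) ≡ p i [ZMOD 3] := by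
  simp only [residueCounts, Prod.mk.injEq] at h
  obtain ⟨σ, hσ⟩ := exists_perm_apply_eq_of_card_fiber_eq (f := fun i => (q i : ZMod 3))
    (g := fun i => (p i : ZMod 3)) fun r => by fin_cases r; exacts [h.1, h.2.1, h.2.2]
  exact ⟨σ, fun i => (ZMod.intCast_eq_intCast_iff _ _ 3).mp (hσ i)⟩

end ResidueCounts

namespace BazaikinFree

variable {q : Fin 6 → ℤ}

theorem neg (h : BazaikinFree q) : BazaikinFree (-q) := by
  obtain ⟨hsum, hodd, hgcd⟩ := h
  refine ⟨by simp [hsum], fun i => (hodd i).neg, fun a b c d hab hac had hbc hbd hcd => ?_⟩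
  simpa only [Pi.neg_apply, ← neg_add, Int.gcd_neg, Int.neg_gcd] using
    hgcd a b c d hab hac had hbc hbd hcd

theorem zeroSumPairsIntersect (h : BazaikinFree q) :
    ZeroSumPairsIntersect fun i => (q i : ZMod 3) := by
  intro a b c d hab hac had hbc hbd hcd hab0 hcd0
  rw [← Int.cast_add, ZMod.intCast_zmod_eq_zero_iff_dvd] at hab0 hcd0
  have h3 := Int.dvd_gcd hab0 hcd0
  rw [h.2.2 a b c d hab hac had hbc hbd hcd] at h3
  norm_num at h3

theorem residueCounts_eq (h : BazaikinFree q)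
    (h21 : (residueCounts fun i => (q i : ZMod 3)).2.2 ≤
      (residueCounts fun i => (q i : ZMod 3)).2.1) :
    (residueCounts fun i => (q i : ZMod 3)) = (0, 6, 0) ∨
      (residueCounts fun i => (q i : ZMod 3)) = (3, 3, 0) ∨
      (residueCounts fun i => (q i : ZMod 3)) = (1, 4, 1) :=
  residueCounts_eq_of_zeroSumPairsIntersect (Fintype.card_fin 6)
    (by simpa using congrArg (Int.cast : ℤ → ZMod 3) h.1) h.zeroSumPairsIntersect h21

end BazaikinFree

theorem residues_mod_three (q : Fin 6 → ℤ) (h : BazaikinFree q) :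
    ∃ (σ : Equiv.Perm (Fin 6)) (ε : ℤ), (ε = 1 ∨ ε = -1) ∧
      ((∀ i : Fin 6, ε * q (σ i) ≡ (![1, 1, 1, 1, 1, 1] : Fin 6 → ℤ) i [ZMOD 3]) ∨
       (∀ i : Fin 6, ε * q (σ i) ≡ (![1, 1, 1, 0, 0, 0] : Fin 6 → ℤ) i [ZMOD 3]) ∨
       (∀ i : Fin 6, ε * q (σ i) ≡ (![1, 1, 1, 1, 2, 0] : Fin 6 → ℤ) i [ZMOD 3])) := by
  obtain ⟨ε, hε, hεq, h21⟩ : ∃ ε : ℤ, (ε = 1 ∨ ε = -1) ∧ BazaikinFree (ε • q) ∧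
      (residueCounts fun i => ((ε • q) i : ZMod 3)).2.2 ≤
        (residueCounts fun i => ((ε • q) i : ZMod 3)).2.1 := by
    rcases le_total (residueCounts fun i => (q i : ZMod 3)).2.2
      (residueCounts fun i => (q i : ZMod 3)).2.1 with hle | hle
    · exact ⟨1, .inl rfl, by simpa using h, by simpa using hle⟩
    · exact ⟨-1, .inr rfl, by simpa using h.neg, by simpa [residueCounts_neg] using hle⟩
  rcases hεq.residueCounts_eq h21 with hc | hc | hc
  · obtain ⟨σ, hσ⟩ := exists_perm_modEq_of_residueCounts_eq (p := ![1, 1, 1, 1, 1, 1])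
      (hc.trans (by decide))
    exact ⟨σ, ε, hε, .inl hσ⟩
  · obtain ⟨σ, hσ⟩ := exists_perm_modEq_of_residueCounts_eq (p := ![1, 1, 1, 0, 0, 0])
      (hc.trans (by decide))
    exact ⟨σ, ε, hε, .inr (.inl hσ)⟩
  · obtain ⟨σ, hσ⟩ := exists_perm_modEq_of_residueCounts_eq (p := ![1, 1, 1, 1, 2, 0])
      (hc.trans (by decide))
    exact ⟨σ, ε, hε, .inr (.inr hσ)⟩
end

section
/- Let q = (q_0, ..., q_5) ∈ ℤ^6 satisfy the Bazaikin freeness condition. Then 3 does not divide σ_3(q); in particular, the integer s defined by 8s = |σ_3(q)| satisfies s ≡ ±1 (mod 3). -/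
/-!
Reduce modulo 3. Since `3 ∤ 2`, the gcd condition says that no two disjoint pairs of the residues
`q i mod 3` both sum to `0`; together with `∑ q i ≡ 0` this leaves, up to exchanging `1` and `2`,
only the residue multisets `{0, 0, 0, 1, 1, 1}`, `{1, 1, 1, 1, 1, 1}` and `{0, 1, 1, 1, 1, 2}`,
on each of which `σ₃` is nonzero modulo 3.
-/

theorem Finset.exists_mem_of_cons_le_map {ι α : Type*} [DecidableEq ι] {f : ι → α}
    {s : Finset ι} {a : α} {t : Multiset α} (h : a ::ₘ t ≤ s.val.map f) :
    ∃ i ∈ s, f i = a ∧ t ≤ (s.erase i).val.map f := by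
  obtain ⟨i, hi, rfl⟩ := Multiset.mem_map.mp (Multiset.mem_of_le h (Multiset.mem_cons_self a t))
  refine ⟨i, hi, rfl, ?_⟩
  rwa [← Finset.insert_erase hi, Finset.insert_val_of_notMem (Finset.notMem_erase i s),
    Multiset.map_cons, Multiset.cons_le_cons_iff] at h

namespace Multiset

def HasTwoDisjointZeroSumPairs {α : Type*} [Add α] [Zero α] (s : Multiset α) : Prop :=
  ∃ a b c d : α, a + b = 0 ∧ c + d = 0 ∧ {a, b, c, d} ≤ s

theorem eq_replicate_count_zmod_three (s : Multiset (ZMod 3)) :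
    s = replicate (count 0 s) 0 + replicate (count 1 s) 1 + replicate (count 2 s) 2 := by
  ext a
  obtain rfl | rfl | rfl : a = 0 ∨ a = 1 ∨ a = 2 := by revert a; decide
  all_goals simp +decide [count_replicate]

set_option synthInstance.maxSize 1000 in
set_option maxRecDepth 100000 in
theorem esymm_three_ne_zero_of_card_eq_six (s : Multiset (ZMod 3)) (hcard : card s = 6)
    (hsum : s.sum = 0) (hpairs : ¬ s.HasTwoDisjointZeroSumPairs) : s.esymm 3 ≠ 0 := by
  unfold HasTwoDisjointZeroSumPairs at hpairs
  rw [eq_replicate_count_zmod_three s] at hcard hsum hpairs ⊢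
  simp only [card_add, card_replicate] at hcard
  obtain ⟨h₀, h₁, h₂⟩ : count 0 s ≤ 6 ∧ count 1 s ≤ 6 - count 0 s ∧
      count 2 s = 6 - count 0 s - count 1 s := by omega
  rw [h₂] at hsum hpairs ⊢
  revert hsum hpairs
  generalize count 0 s = n₀, count 1 s = n₁ at *
  clear h₂ hcard
  -- a check of the 28 possible counts of `0` and `1`
  revert h₁; revert n₁; revert h₀; revert n₀
  decide +kernel

end Multiset

theorem BazaikinFree.not_hasTwoDisjointZeroSumPairs {q : Fin 6 → ℤ} (h : BazaikinFree q) :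
    ¬ (Finset.univ.val.map fun i => (q i : ZMod 3)).HasTwoDisjointZeroSumPairs := by
  obtain ⟨-, -, hgcd⟩ := h
  rintro ⟨_, _, _, _, hij, hkl, hle⟩
  obtain ⟨i, -, rfl, hle₁⟩ := Finset.exists_mem_of_cons_le_map hle
  obtain ⟨j, hj, rfl, hle₂⟩ := Finset.exists_mem_of_cons_le_map hle₁
  obtain ⟨k, hk, rfl, hle₃⟩ := Finset.exists_mem_of_cons_le_map hle₂
  obtain ⟨l, hl, rfl, -⟩ := Finset.exists_mem_of_cons_le_map hle₃
  simp only [Finset.mem_erase] at hj hk hl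
  have h3ij : (3 : ℤ) ∣ q i + q j :=
    (ZMod.intCast_zmod_eq_zero_iff_dvd _ 3).mp (by push_cast; exact hij)
  have h3kl : (3 : ℤ) ∣ q k + q l :=
    (ZMod.intCast_zmod_eq_zero_iff_dvd _ 3).mp (by push_cast; exact hkl)
  have h32 := Int.dvd_gcd h3ij h3kl
  rw [hgcd i j k l (by tauto) (by tauto) (by tauto) (by tauto) (by tauto) (by tauto)] at h32
  norm_num at h32

theorem three_not_dvd_sigma3 (q : Fin 6 → ℤ) (h : BazaikinFree q) :
    ¬ (3 ∣ esymm 3 q) := by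
  set s := Finset.univ.val.map fun i => (q i : ZMod 3)
  have hesymm : ((esymm 3 q : ℤ) : ZMod 3) = s.esymm 3 := by
    rw [Finset.esymm_map_val, esymm]
    push_cast
    rfl
  have hsum : s.sum = 0 := by
    rw [← Finset.sum_eq_multiset_sum, ← Int.cast_sum, h.1, Int.cast_zero]
  intro hdvd
  refine s.esymm_three_ne_zero_of_card_eq_six (by simp [s]) hsum
    h.not_hasTwoDisjointZeroSumPairs ?_
  rw [← hesymm]
  exact (ZMod.intCast_zmod_eq_zero_iff_dvd _ 3).mpr hdvd
end

section
/- Let q = (q_0, ..., q_5) ∈ ℤ^6 satisfy the Bazaikin freeness condition. Then −σ_2(q) ≡ 7 (mod 24) or −σ_2(q) ≡ 15 (mod 24). (This is Corollary 3.2(a): the first Pontryagin class p_1 = −σ_2(q) of a Bazaikin space satisfies p_1 = 7 or 15 mod 24.) -/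
open Finset

theorem esymm_eq_eval {n : ℕ} (k : ℕ) (q : Fin n → ℤ) :
    esymm k q = MvPolynomial.eval q (MvPolynomial.esymm (Fin n) ℤ k) := by
  simp_rw [esymm, MvPolynomial.esymm, map_sum, map_prod, MvPolynomial.eval_X]

theorem Int.sum_modEq_of_forall_modEq_ite {ι : Type*} [Fintype ι] {f : ι → ℤ} {p : ι → Prop}
    [DecidablePred p] {n a b : ℤ} (h : ∀ i, f i ≡ a + if p i then b else 0 [ZMOD n]) :
    ∑ i, f i ≡ Fintype.card ι * a + #{i | p i} * b [ZMOD n] := by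
  refine (Int.ModEq.sum fun i _ ↦ h i).trans ?_
  simp [sum_add_distrib, sum_ite]

theorem Int.sq_sub_two_mul_modEq_sixteen {x : ℤ} (hx : Odd x) :
    x ^ 2 - 2 * x ≡ -1 + if x % 4 = 3 then 4 else 0 [ZMOD 16] := by
  obtain ⟨m, rfl | rfl⟩ : ∃ m, x = 4 * m + 1 ∨ x = 4 * m + 3 := by
    obtain ⟨k, rfl⟩ := hx
    exact ⟨k / 2, by omega⟩
  · rw [if_neg (by omega)]
    exact Int.modEq_iff_dvd.2 ⟨-m ^ 2, by ring⟩
  · rw [if_pos (by omega)]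
    exact Int.modEq_iff_dvd.2 ⟨-(m ^ 2 + m), by ring⟩

theorem Int.sq_modEq_three (x : ℤ) : x ^ 2 ≡ 1 + if x % 3 = 0 then -1 else 0 [ZMOD 3] := by
  obtain ⟨m, rfl | rfl | rfl⟩ : ∃ m, x = 3 * m ∨ x = 3 * m + 1 ∨ x = 3 * m + 2 :=
    ⟨x / 3, by omega⟩
  · rw [if_pos (by omega)]
    exact Int.modEq_iff_dvd.2 ⟨-3 * m ^ 2, by ring⟩
  · rw [if_neg (by omega)]
    exact Int.modEq_iff_dvd.2 ⟨-(3 * m ^ 2 + 2 * m), by ring⟩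
  · rw [if_neg (by omega)]
    exact Int.modEq_iff_dvd.2 ⟨-(3 * m ^ 2 + 4 * m + 1), by ring⟩

theorem exists_emod_three_eq_one_and_two {ι : Type*} [Fintype ι] {q : ι → ℤ}
    (hsum : 3 ∣ ∑ i, q i) (hcard : ¬ 3 ∣ (Fintype.card ι - #{i | q i % 3 = 0} : ℤ)) :
    (∃ c, q c % 3 = 1) ∧ ∃ d, q d % 3 = 2 := by
  constructor <;> by_contra! h
  · have hS : ∑ i, q i ≡ Fintype.card ι * -1 + #{i | q i % 3 = 0} * 1 [ZMOD 3] :=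
      Int.sum_modEq_of_forall_modEq_ite fun i ↦ by
        have := h i
        split_ifs <;> unfold Int.ModEq <;> omega
    unfold Int.ModEq at hS
    omega
  · have hS : ∑ i, q i ≡ Fintype.card ι * 1 + #{i | q i % 3 = 0} * -1 [ZMOD 3] :=
      Int.sum_modEq_of_forall_modEq_ite fun i ↦ by
        have := h i
        split_ifs <;> unfold Int.ModEq <;> omega
    unfold Int.ModEq at hS
    omega

theorem BazaikinFree.sum_sq {q : Fin 6 → ℤ} (h : BazaikinFree q) :
    ∑ i, q i ^ 2 = -2 * esymm 2 q := by
  linear_combination two_mul_esymm_two q + (∑ i, q i) * h.1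

theorem BazaikinFree.not_dvd_add {q : Fin 6 → ℤ} (h : BazaikinFree q) {p : ℤ} (hp : ¬ p ∣ 2)
    {a b c d : Fin 6} (hab : a ≠ b) (hac : a ≠ c) (had : a ≠ d) (hbc : b ≠ c) (hbd : b ≠ d)
    (hcd : c ≠ d) (h₁ : p ∣ q a + q b) : ¬ p ∣ q c + q d := fun h₂ ↦ by
  have := Int.dvd_coe_gcd h₁ h₂
  rw [h.2.2 a b c d hab hac had hbc hbd hcd] at this
  exact hp this

theorem BazaikinFree.neg_esymm_two_modEq_seven {q : Fin 6 → ℤ} (h : BazaikinFree q) :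
    -esymm 2 q ≡ 7 [ZMOD 8] := by
  set s : Finset (Fin 6) := {i | q i % 4 = 3}
  have hodd (i : Fin 6) : q i % 2 = 1 := Int.odd_iff.1 (h.2.1 i)
  have hlin : ∑ i, q i ≡ 6 * 1 + #s * 2 [ZMOD 4] :=
    Int.sum_modEq_of_forall_modEq_ite fun i ↦ by
      have := hodd i
      split_ifs <;> unfold Int.ModEq <;> omega
  have hquad : ∑ i, (q i ^ 2 - 2 * q i) ≡ 6 * -1 + #s * 4 [ZMOD 16] :=
    Int.sum_modEq_of_forall_modEq_ite fun i ↦ Int.sq_sub_two_mul_modEq_sixteen (h.2.1 i)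
  rw [sum_sub_distrib, ← mul_sum, h.sum_sq, h.1] at hquad
  rw [h.1] at hlin
  have hs : #s ≠ 3 := by
    intro hs
    obtain ⟨a, ha, c, hc, hac⟩ := one_lt_card.1 (by omega : 1 < #s)
    obtain ⟨b, hb, d, hd, hbd⟩ := one_lt_card.1 (by rw [card_compl]; simp [hs] : 1 < #sᶜ)
    rw [mem_compl] at hb hd
    have hab := ne_of_mem_of_not_mem ha hb
    have had := ne_of_mem_of_not_mem ha hd
    have hcb := ne_of_mem_of_not_mem hc hb
    have hcd := ne_of_mem_of_not_mem hc hd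
    simp only [s, mem_filter_univ] at ha hb hc hd
    have := hodd b
    have := hodd d
    exact h.not_dvd_add (by decide : ¬ (4 : ℤ) ∣ 2) hab hac had hcb.symm hbd hcd
      (by omega) (by omega)
  have : #s ≤ 6 := card_le_univ s
  unfold Int.ModEq at *
  omega

theorem BazaikinFree.neg_esymm_two_not_modEq_two {q : Fin 6 → ℤ} (h : BazaikinFree q) :
    ¬ -esymm 2 q ≡ 2 [ZMOD 3] := by
  intro hbad
  set z := #{i | q i % 3 = 0}
  have hquad : ∑ i, q i ^ 2 ≡ 6 * 1 + z * -1 [ZMOD 3] :=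
    Int.sum_modEq_of_forall_modEq_ite fun i ↦ Int.sq_modEq_three (q i)
  rw [h.sum_sq] at hquad
  have : z ≤ 6 := card_le_univ _
  unfold Int.ModEq at hquad hbad
  obtain ⟨a, ha, b, hb, hab⟩ := one_lt_card.1 (by omega : 1 < z)
  obtain ⟨⟨c, hc⟩, d, hd⟩ := exists_emod_three_eq_one_and_two (q := q) (by simp [h.1])
    (by simp only [Fintype.card_fin]; omega)
  simp only [mem_filter_univ] at ha hb
  have hne {i j : Fin 6} (hij : q i % 3 ≠ q j % 3) : i ≠ j := by rintro rfl; exact hij rfl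
  exact h.not_dvd_add (c := c) (d := d) (by decide : ¬ (3 : ℤ) ∣ 2) hab (hne (by omega))
    (hne (by omega)) (hne (by omega)) (hne (by omega)) (hne (by omega)) (by omega) (by omega)

theorem p1_mod_twentyfour (q : Fin 6 → ℤ) (h : BazaikinFree q) :
    (-esymm 2 q ≡ 7 [ZMOD 24]) ∨ (-esymm 2 q ≡ 15 [ZMOD 24]) := by
  have h8 := h.neg_esymm_two_modEq_seven
  have h3 := h.neg_esymm_two_not_modEq_two
  unfold Int.ModEq at *
  omega
end

section
/- Let q = (q_0, ..., q_5) ∈ ℤ^6 satisfy the Bazaikin freeness condition. Then −σ_2(q) ≡ 15 (mod 24) if and only if, up to reordering and an overall sign change, q mod 3 equals (1,1,1,1,1,1) or (1,1,1,0,0,0); and −σ_2(q) ≡ 7 (mod 24) if and only if, up to reordering and an overall sign change, q mod 3 equals (1,1,1,1,2,0). -/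
/-- `q` is congruent mod 3, up to reordering and an overall sign change, to `r`. -/
def MatchesMod3 (q r : Fin 6 → ℤ) : Prop :=
  ∃ (σ : Equiv.Perm (Fin 6)) (ε : ℤ), (ε = 1 ∨ ε = -1) ∧
    ∀ i : Fin 6, ε * q (σ i) ≡ r i [ZMOD 3]


set_option maxRecDepth 100000 in
set_option synthInstance.maxSize 10000 in
set_option synthInstance.maxHeartbeats 2000000 in
set_option maxHeartbeats 2000000 in
private theorem bazaikin_key8 : ∀ v0 v1 v2 v3 v4 v5 : ZMod 4,
    v0+v1+v2+v3+v4+v5 = 1 →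
    (¬((v0 + v1 = 1 ∨ v0 + v1 = 3) ∧ (v2 + v3 = 1 ∨ v2 + v3 = 3))
      ∧ ¬((v0 + v1 = 1 ∨ v0 + v1 = 3) ∧ (v2 + v4 = 1 ∨ v2 + v4 = 3))
      ∧ ¬((v0 + v1 = 1 ∨ v0 + v1 = 3) ∧ (v2 + v5 = 1 ∨ v2 + v5 = 3))
      ∧ ¬((v0 + v1 = 1 ∨ v0 + v1 = 3) ∧ (v3 + v4 = 1 ∨ v3 + v4 = 3))
      ∧ ¬((v0 + v1 = 1 ∨ v0 + v1 = 3) ∧ (v3 + v5 = 1 ∨ v3 + v5 = 3))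
      ∧ ¬((v0 + v1 = 1 ∨ v0 + v1 = 3) ∧ (v4 + v5 = 1 ∨ v4 + v5 = 3))
      ∧ ¬((v0 + v2 = 1 ∨ v0 + v2 = 3) ∧ (v1 + v3 = 1 ∨ v1 + v3 = 3))
      ∧ ¬((v0 + v2 = 1 ∨ v0 + v2 = 3) ∧ (v1 + v4 = 1 ∨ v1 + v4 = 3))
      ∧ ¬((v0 + v2 = 1 ∨ v0 + v2 = 3) ∧ (v1 + v5 = 1 ∨ v1 + v5 = 3))
      ∧ ¬((v0 + v2 = 1 ∨ v0 + v2 = 3) ∧ (v3 + v4 = 1 ∨ v3 + v4 = 3))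
      ∧ ¬((v0 + v2 = 1 ∨ v0 + v2 = 3) ∧ (v3 + v5 = 1 ∨ v3 + v5 = 3))
      ∧ ¬((v0 + v2 = 1 ∨ v0 + v2 = 3) ∧ (v4 + v5 = 1 ∨ v4 + v5 = 3))
      ∧ ¬((v0 + v3 = 1 ∨ v0 + v3 = 3) ∧ (v1 + v2 = 1 ∨ v1 + v2 = 3))
      ∧ ¬((v0 + v3 = 1 ∨ v0 + v3 = 3) ∧ (v1 + v4 = 1 ∨ v1 + v4 = 3))
      ∧ ¬((v0 + v3 = 1 ∨ v0 + v3 = 3) ∧ (v1 + v5 = 1 ∨ v1 + v5 = 3))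
      ∧ ¬((v0 + v3 = 1 ∨ v0 + v3 = 3) ∧ (v2 + v4 = 1 ∨ v2 + v4 = 3))
      ∧ ¬((v0 + v3 = 1 ∨ v0 + v3 = 3) ∧ (v2 + v5 = 1 ∨ v2 + v5 = 3))
      ∧ ¬((v0 + v3 = 1 ∨ v0 + v3 = 3) ∧ (v4 + v5 = 1 ∨ v4 + v5 = 3))
      ∧ ¬((v0 + v4 = 1 ∨ v0 + v4 = 3) ∧ (v1 + v2 = 1 ∨ v1 + v2 = 3))
      ∧ ¬((v0 + v4 = 1 ∨ v0 + v4 = 3) ∧ (v1 + v3 = 1 ∨ v1 + v3 = 3))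
      ∧ ¬((v0 + v4 = 1 ∨ v0 + v4 = 3) ∧ (v1 + v5 = 1 ∨ v1 + v5 = 3))
      ∧ ¬((v0 + v4 = 1 ∨ v0 + v4 = 3) ∧ (v2 + v3 = 1 ∨ v2 + v3 = 3))
      ∧ ¬((v0 + v4 = 1 ∨ v0 + v4 = 3) ∧ (v2 + v5 = 1 ∨ v2 + v5 = 3))
      ∧ ¬((v0 + v4 = 1 ∨ v0 + v4 = 3) ∧ (v3 + v5 = 1 ∨ v3 + v5 = 3))
      ∧ ¬((v0 + v5 = 1 ∨ v0 + v5 = 3) ∧ (v1 + v2 = 1 ∨ v1 + v2 = 3))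
      ∧ ¬((v0 + v5 = 1 ∨ v0 + v5 = 3) ∧ (v1 + v3 = 1 ∨ v1 + v3 = 3))
      ∧ ¬((v0 + v5 = 1 ∨ v0 + v5 = 3) ∧ (v1 + v4 = 1 ∨ v1 + v4 = 3))
      ∧ ¬((v0 + v5 = 1 ∨ v0 + v5 = 3) ∧ (v2 + v3 = 1 ∨ v2 + v3 = 3))
      ∧ ¬((v0 + v5 = 1 ∨ v0 + v5 = 3) ∧ (v2 + v4 = 1 ∨ v2 + v4 = 3))
      ∧ ¬((v0 + v5 = 1 ∨ v0 + v5 = 3) ∧ (v3 + v4 = 1 ∨ v3 + v4 = 3))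
      ∧ ¬((v1 + v2 = 1 ∨ v1 + v2 = 3) ∧ (v3 + v4 = 1 ∨ v3 + v4 = 3))
      ∧ ¬((v1 + v2 = 1 ∨ v1 + v2 = 3) ∧ (v3 + v5 = 1 ∨ v3 + v5 = 3))
      ∧ ¬((v1 + v2 = 1 ∨ v1 + v2 = 3) ∧ (v4 + v5 = 1 ∨ v4 + v5 = 3))
      ∧ ¬((v1 + v3 = 1 ∨ v1 + v3 = 3) ∧ (v2 + v4 = 1 ∨ v2 + v4 = 3))
      ∧ ¬((v1 + v3 = 1 ∨ v1 + v3 = 3) ∧ (v2 + v5 = 1 ∨ v2 + v5 = 3))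
      ∧ ¬((v1 + v3 = 1 ∨ v1 + v3 = 3) ∧ (v4 + v5 = 1 ∨ v4 + v5 = 3))
      ∧ ¬((v1 + v4 = 1 ∨ v1 + v4 = 3) ∧ (v2 + v3 = 1 ∨ v2 + v3 = 3))
      ∧ ¬((v1 + v4 = 1 ∨ v1 + v4 = 3) ∧ (v2 + v5 = 1 ∨ v2 + v5 = 3))
      ∧ ¬((v1 + v4 = 1 ∨ v1 + v4 = 3) ∧ (v3 + v5 = 1 ∨ v3 + v5 = 3))
      ∧ ¬((v1 + v5 = 1 ∨ v1 + v5 = 3) ∧ (v2 + v3 = 1 ∨ v2 + v3 = 3))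
      ∧ ¬((v1 + v5 = 1 ∨ v1 + v5 = 3) ∧ (v2 + v4 = 1 ∨ v2 + v4 = 3))
      ∧ ¬((v1 + v5 = 1 ∨ v1 + v5 = 3) ∧ (v3 + v4 = 1 ∨ v3 + v4 = 3))
      ∧ ¬((v2 + v3 = 1 ∨ v2 + v3 = 3) ∧ (v4 + v5 = 1 ∨ v4 + v5 = 3))
      ∧ ¬((v2 + v4 = 1 ∨ v2 + v4 = 3) ∧ (v3 + v5 = 1 ∨ v3 + v5 = 3))
      ∧ ¬((v2 + v5 = 1 ∨ v2 + v5 = 3) ∧ (v3 + v4 = 1 ∨ v3 + v4 = 3))) →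
    2*(v0*v1 + v0*v2 + v0*v3 + v0*v4 + v0*v5 + v1*v2 + v1*v3 + v1*v4 + v1*v5 + v2*v3 + v2*v4 + v2*v5 + v3*v4 + v3*v5 + v4*v5) + 5*(v0+v1+v2+v3+v4+v5) = 1 := by decide

set_option maxRecDepth 100000 in
set_option synthInstance.maxSize 10000 in
set_option synthInstance.maxHeartbeats 2000000 in
set_option maxHeartbeats 2000000 in
private theorem bazaikin_key3 : ∀ b0 b1 b2 b3 b4 b5 : ZMod 3, b0+b1+b2+b3+b4+b5 = 0 →
    (¬(b0 + b1 = 0 ∧ b2 + b3 = 0)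
      ∧ ¬(b0 + b1 = 0 ∧ b2 + b4 = 0)
      ∧ ¬(b0 + b1 = 0 ∧ b2 + b5 = 0)
      ∧ ¬(b0 + b1 = 0 ∧ b3 + b4 = 0)
      ∧ ¬(b0 + b1 = 0 ∧ b3 + b5 = 0)
      ∧ ¬(b0 + b1 = 0 ∧ b4 + b5 = 0)
      ∧ ¬(b0 + b2 = 0 ∧ b1 + b3 = 0)
      ∧ ¬(b0 + b2 = 0 ∧ b1 + b4 = 0)
      ∧ ¬(b0 + b2 = 0 ∧ b1 + b5 = 0)
      ∧ ¬(b0 + b2 = 0 ∧ b3 + b4 = 0)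
      ∧ ¬(b0 + b2 = 0 ∧ b3 + b5 = 0)
      ∧ ¬(b0 + b2 = 0 ∧ b4 + b5 = 0)
      ∧ ¬(b0 + b3 = 0 ∧ b1 + b2 = 0)
      ∧ ¬(b0 + b3 = 0 ∧ b1 + b4 = 0)
      ∧ ¬(b0 + b3 = 0 ∧ b1 + b5 = 0)
      ∧ ¬(b0 + b3 = 0 ∧ b2 + b4 = 0)
      ∧ ¬(b0 + b3 = 0 ∧ b2 + b5 = 0)
      ∧ ¬(b0 + b3 = 0 ∧ b4 + b5 = 0)
      ∧ ¬(b0 + b4 = 0 ∧ b1 + b2 = 0)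
      ∧ ¬(b0 + b4 = 0 ∧ b1 + b3 = 0)
      ∧ ¬(b0 + b4 = 0 ∧ b1 + b5 = 0)
      ∧ ¬(b0 + b4 = 0 ∧ b2 + b3 = 0)
      ∧ ¬(b0 + b4 = 0 ∧ b2 + b5 = 0)
      ∧ ¬(b0 + b4 = 0 ∧ b3 + b5 = 0)
      ∧ ¬(b0 + b5 = 0 ∧ b1 + b2 = 0)
      ∧ ¬(b0 + b5 = 0 ∧ b1 + b3 = 0)
      ∧ ¬(b0 + b5 = 0 ∧ b1 + b4 = 0)
      ∧ ¬(b0 + b5 = 0 ∧ b2 + b3 = 0)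
      ∧ ¬(b0 + b5 = 0 ∧ b2 + b4 = 0)
      ∧ ¬(b0 + b5 = 0 ∧ b3 + b4 = 0)
      ∧ ¬(b1 + b2 = 0 ∧ b3 + b4 = 0)
      ∧ ¬(b1 + b2 = 0 ∧ b3 + b5 = 0)
      ∧ ¬(b1 + b2 = 0 ∧ b4 + b5 = 0)
      ∧ ¬(b1 + b3 = 0 ∧ b2 + b4 = 0)
      ∧ ¬(b1 + b3 = 0 ∧ b2 + b5 = 0)
      ∧ ¬(b1 + b3 = 0 ∧ b4 + b5 = 0)
      ∧ ¬(b1 + b4 = 0 ∧ b2 + b3 = 0)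
      ∧ ¬(b1 + b4 = 0 ∧ b2 + b5 = 0)
      ∧ ¬(b1 + b4 = 0 ∧ b3 + b5 = 0)
      ∧ ¬(b1 + b5 = 0 ∧ b2 + b3 = 0)
      ∧ ¬(b1 + b5 = 0 ∧ b2 + b4 = 0)
      ∧ ¬(b1 + b5 = 0 ∧ b3 + b4 = 0)
      ∧ ¬(b2 + b3 = 0 ∧ b4 + b5 = 0)
      ∧ ¬(b2 + b4 = 0 ∧ b3 + b5 = 0)
      ∧ ¬(b2 + b5 = 0 ∧ b3 + b4 = 0)) →
    ((b0*b1 + b0*b2 + b0*b3 + b0*b4 + b0*b5 + b1*b2 + b1*b3 + b1*b4 + b1*b5 + b2*b3 + b2*b4 + b2*b5 + b3*b4 + b3*b5 + b4*b5 = 0) ∧ ((((if b0 = 0 then 1 else 0) + (if b1 = 0 then 1 else 0) + (if b2 = 0 then 1 else 0) + (if b3 = 0 then 1 else 0) + (if b4 = 0 then 1 else 0) + (if b5 = 0 then 1 else 0)) = 0 ∧ ((if b0 = 1 then 1 else 0) + (if b1 = 1 then 1 else 0) + (if b2 = 1 then 1 else 0) + (if b3 = 1 then 1 else 0) + (if b4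 = 1 then 1 else 0) + (if b5 = 1 then 1 else 0)) = 6 ∧ ((if b0 = 2 then 1 else 0) + (if b1 = 2 then 1 else 0) + (if b2 = 2 then 1 else 0) + (if b3 = 2 then 1 else 0) + (if b4 = 2 then 1 else 0) + (if b5 = 2 then 1 else 0)) = 0) ∨ (((if b0 = 0 then 1 else 0) + (if b1 = 0 then 1 else 0) + (if b2 = 0 then 1 else 0) + (if b3 = 0 then 1 else 0) + (if b4 = 0 then 1 else 0) + (if b5 = 0 then 1 else 0)) = 0 ∧ ((if b0 = 1 then 1 else 0) + (if b1 = 1 then 1 else 0) + (if b2 = 1 then 1 else 0) + (if b3 = 1 then 1 else 0) + (if b4 = 1 then 1 else 0) + (if b5 = 1 then 1 else 0)) = 0 ∧ ((if b0 = 2 then 1 else 0) + (if b1 = 2 then 1 else 0) + (if b2 = 2 then 1 else 0) + (if b3 = 2 then 1 else 0) + (if b4 = 2 then 1 else 0) + (if b5 = 2 then 1 else 0)) = 6) ∨ (((if b0 = 0 then 1 else 0) + (if b1 = 0 then 1 else 0) + (if b2 = 0 then 1 else 0) + (if b3 = 0 then 1 else 0) + (if b4 = 0 then 1 else 0) + (if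 b5 = 0 then 1 else 0)) = 3 ∧ ((if b0 = 1 then 1 else 0) + (if b1 = 1 then 1 else 0) + (if b2 = 1 then 1 else 0) + (if b3 = 1 then 1 else 0) + (if b4 = 1 then 1 else 0) + (if b5 = 1 then 1 else 0)) = 3 ∧ ((if b0 = 2 then 1 else 0) + (if b1 = 2 then 1 else 0) + (if b2 = 2 then 1 else 0) + (if b3 = 2 then 1 else 0) + (if b4 = 2 then 1 else 0) + (if b5 = 2 then 1 else 0)) = 0) ∨ (((if b0 = 0 then 1 else 0) + (if b1 = 0 then 1 else 0) + (if b2 = 0 then 1 else 0) + (if b3 = 0 then 1 else 0) + (if b4 = 0 then 1 else 0) + (if b5 = 0 then 1 else 0)) = 3 ∧ ((if b0 = 1 then 1 else 0) + (if b1 = 1 then 1 else 0) + (if b2 = 1 then 1 else 0) + (if b3 = 1 then 1 else 0) + (if b4 = 1 then 1 else 0) + (if b5 = 1 then 1 else 0)) = 0 ∧ ((if b0 = 2 then 1 else 0) + (if b1 = 2 then 1 else 0) + (if b2 = 2 then 1 else 0) + (if b3 = 2 then 1 else 0) + (if b4 = 2 then 1 else 0) + (if b5 = 2 then 1 else 0))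 = 3))) ∨
    ((b0*b1 + b0*b2 + b0*b3 + b0*b4 + b0*b5 + b1*b2 + b1*b3 + b1*b4 + b1*b5 + b2*b3 + b2*b4 + b2*b5 + b3*b4 + b3*b5 + b4*b5 = 2) ∧ ((((if b0 = 0 then 1 else 0) + (if b1 = 0 then 1 else 0) + (if b2 = 0 then 1 else 0) + (if b3 = 0 then 1 else 0) + (if b4 = 0 then 1 else 0) + (if b5 = 0 then 1 else 0)) = 1 ∧ ((if b0 = 1 then 1 else 0) + (if b1 = 1 then 1 else 0) + (if b2 = 1 then 1 else 0) + (if b3 = 1 then 1 else 0) + (if b4 = 1 then 1 else 0) + (if b5 = 1 then 1 else 0)) = 4 ∧ ((if b0 = 2 then 1 else 0) + (if b1 = 2 then 1 else 0) + (if b2 = 2 then 1 else 0) + (if b3 = 2 then 1 else 0) + (if b4 = 2 then 1 else 0) + (if b5 = 2 then 1 else 0)) = 1) ∨ (((if b0 = 0 then 1 else 0) + (if b1 = 0 then 1 else 0) + (if b2 = 0 then 1 else 0) + (if b3 = 0 then 1 else 0) + (if b4 = 0 then 1 else 0) + (if b5 = 0 then 1 else 0)) = 1 ∧ ((if b0 =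 1 then 1 else 0) + (if b1 = 1 then 1 else 0) + (if b2 = 1 then 1 else 0) + (if b3 = 1 then 1 else 0) + (if b4 = 1 then 1 else 0) + (if b5 = 1 then 1 else 0)) = 1 ∧ ((if b0 = 2 then 1 else 0) + (if b1 = 2 then 1 else 0) + (if b2 = 2 then 1 else 0) + (if b3 = 2 then 1 else 0) + (if b4 = 2 then 1 else 0) + (if b5 = 2 then 1 else 0)) = 4))) := by decide

private theorem esymm_two_expand (q : Fin 6 → ℤ) :
    esymm 2 q = q 0*q 1 + q 0*q 2 + q 0*q 3 + q 0*q 4 + q 0*q 5 + q 1*q 2 + q 1*q 3 + q 1*q 4 + q 1*q 5 + q 2*q 3 + q 2*q 4 + q 2*q 5 + q 3*q 4 + q 3*q 5 + q 4*q 5 := by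
  rw [esymm, show (Finset.univ.powersetCard 2 : Finset (Finset (Fin 6))) =
    {{0,1},{0,2},{0,3},{0,4},{0,5},{1,2},{1,3},{1,4},{1,5},{2,3},{2,4},{2,5},{3,4},{3,5},{4,5}} from by decide]
  simp +decide [Finset.sum_insert, Finset.prod_insert]
  ring

private theorem clause3 {qa qb qc qd : ℤ} (hg : Int.gcd (qa+qb) (qc+qd) = 2) :
    ¬((qa : ZMod 3) + (qb : ZMod 3) = 0 ∧ (qc : ZMod 3) + (qd : ZMod 3) = 0) := by
  rintro ⟨h1, h2⟩
  have d1 : ((3:ℕ):ℤ) ∣ qa + qb := (ZMod.intCast_zmod_eq_zero_iff_dvd _ _).mp (by push_cast; exact h1)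
  have d2 : ((3:ℕ):ℤ) ∣ qc + qd := (ZMod.intCast_zmod_eq_zero_iff_dvd _ _).mp (by push_cast; exact h2)
  have hdv := Int.dvd_gcd d1 d2
  rw [hg] at hdv
  norm_num at hdv

private theorem clause4 {qa qb qc qd ka kb kc kd : ℤ} (ha : qa = 2*ka+1) (hb : qb = 2*kb+1)
    (hc : qc = 2*kc+1) (hd : qd = 2*kd+1) (hg : Int.gcd (qa+qb) (qc+qd) = 2) :
    ¬(((ka : ZMod 4) + (kb : ZMod 4) = 1 ∨ (ka : ZMod 4) + (kb : ZMod 4) = 3)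
      ∧ ((kc : ZMod 4) + (kd : ZMod 4) = 1 ∨ (kc : ZMod 4) + (kd : ZMod 4) = 3)) := by
  rintro ⟨h1, h2⟩
  have d1 : (4:ℤ) ∣ qa + qb := by
    rcases h1 with hh | hh
    · have h' : ((ka + kb : ℤ) : ZMod 4) = ((1:ℤ) : ZMod 4) := by push_cast; rw [hh]
      have := (ZMod.intCast_eq_intCast_iff' _ _ _).mp h'
      omega
    · have h' : ((ka + kb : ℤ) : ZMod 4) = ((3:ℤ) : ZMod 4) := by push_cast; rw [hh]
      have := (ZMod.intCast_eq_intCast_iff' _ _ _).mp h'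
      omega
  have d2 : (4:ℤ) ∣ qc + qd := by
    rcases h2 with hh | hh
    · have h' : ((kc + kd : ℤ) : ZMod 4) = ((1:ℤ) : ZMod 4) := by push_cast; rw [hh]
      have := (ZMod.intCast_eq_intCast_iff' _ _ _).mp h'
      omega
    · have h' : ((kc + kd : ℤ) : ZMod 4) = ((3:ℤ) : ZMod 4) := by push_cast; rw [hh]
      have := (ZMod.intCast_eq_intCast_iff' _ _ _).mp h'
      omega
  have hdv := Int.dvd_gcd d1 d2
  rw [hg] at hdv
  norm_num at hdv

private theorem exists_perm_of_count (f g : Fin 6 → ZMod 3)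
    (hc : ∀ x, (Finset.univ.filter fun i => f i = x).card = (Finset.univ.filter fun i => g i = x).card) :
    ∃ σ : Equiv.Perm (Fin 6), ∀ i, f (σ i) = g i := by
  have hcard : ∀ c, Fintype.card {i // g i = c} = Fintype.card {i // f i = c} := by
    intro c
    rw [Fintype.card_subtype, Fintype.card_subtype]
    exact (hc c).symm
  exact ⟨Equiv.ofFiberEquiv (fun c => Fintype.equivOfCardEq (hcard c)),
    fun i => Equiv.ofFiberEquiv_map _ i⟩

private theorem match_of_counts (q r : Fin 6 → ℤ) (ε : ℤ) (hε : ε = 1 ∨ ε = -1)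
    (hc : ∀ x : ZMod 3, (Finset.univ.filter fun i => (ε : ZMod 3) * ((q i : ℤ) : ZMod 3) = x).card
        = (Finset.univ.filter fun i => ((r i : ℤ) : ZMod 3) = x).card) :
    MatchesMod3 q r := by
  obtain ⟨σ, hσ⟩ := exists_perm_of_count (fun i => (ε : ZMod 3) * ((q i : ℤ) : ZMod 3))
    (fun i => ((r i : ℤ) : ZMod 3)) hc
  refine ⟨σ, ε, hε, fun i => ?_⟩
  have h1 := hσ i
  have h2 : ((ε * q (σ i) : ℤ) : ZMod 3) = ((r i : ℤ) : ZMod 3) := by push_cast; exact h1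
  exact (ZMod.intCast_eq_intCast_iff _ _ 3).mp h2

private theorem esymm_mod3_of_match (q r : Fin 6 → ℤ) (hm : MatchesMod3 q r) :
    ((esymm 2 q : ℤ) : ZMod 3)
      = 2 * ((∑ i, ((r i : ℤ) : ZMod 3)) ^ 2 - ∑ i, ((r i : ℤ) : ZMod 3) ^ 2) := by
  obtain ⟨σ, ε, hε, hcong⟩ := hm
  have hε2 : (ε : ZMod 3) * (ε : ZMod 3) = 1 := by
    rcases hε with rfl | rfl <;> norm_num
  have hbg : ∀ i, (ε : ZMod 3) * ((q (σ i) : ℤ) : ZMod 3) = ((r i : ℤ) : ZMod 3) := by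
    intro i
    have h2 : ((ε * q (σ i) : ℤ) : ZMod 3) = ((r i : ℤ) : ZMod 3) :=
      (ZMod.intCast_eq_intCast_iff _ _ 3).mpr (hcong i)
    push_cast at h2
    exact h2
  have hS : ∑ i, ((r i : ℤ) : ZMod 3) = (ε : ZMod 3) * ∑ i, ((q i : ℤ) : ZMod 3) := by
    rw [Finset.mul_sum, ← Equiv.sum_comp σ (fun i => (ε : ZMod 3) * ((q i : ℤ) : ZMod 3))]
    exact Finset.sum_congr rfl fun i _ => (hbg i).symm
  have hT : ∑ i, ((r i : ℤ) : ZMod 3) ^ 2 = ∑ i, ((q i : ℤ) : ZMod 3) ^ 2 := by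
    rw [← Equiv.sum_comp σ (fun i => ((q i : ℤ) : ZMod 3) ^ 2)]
    refine Finset.sum_congr rfl fun i _ => ?_
    calc ((r i : ℤ) : ZMod 3) ^ 2 = ((ε : ZMod 3) * ((q (σ i) : ℤ) : ZMod 3)) ^ 2 := by rw [hbg i]
    _ = ((ε : ZMod 3) * (ε : ZMod 3)) * ((q (σ i) : ℤ) : ZMod 3) ^ 2 := by ring
    _ = ((q (σ i) : ℤ) : ZMod 3) ^ 2 := by rw [hε2, one_mul]
  have h1 : ((esymm 2 q : ℤ) : ZMod 3)
      = 2 * ((∑ i, ((q i : ℤ) : ZMod 3)) ^ 2 - ∑ i, ((q i : ℤ) : ZMod 3) ^ 2) := by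
    rw [esymm_two_expand q]
    push_cast
    rw [Fin.sum_univ_six (f := fun i => ((q i : ℤ) : ZMod 3)),
      Fin.sum_univ_six (f := fun i => ((q i : ℤ) : ZMod 3) ^ 2)]
    have h3 : (3 : ZMod 3) = 0 := by decide
    linear_combination (-(((q 0 : ℤ) : ZMod 3)*((q 1 : ℤ) : ZMod 3) + ((q 0 : ℤ) : ZMod 3)*((q 2 : ℤ) : ZMod 3) + ((q 0 : ℤ) : ZMod 3)*((q 3 : ℤ) : ZMod 3) + ((q 0 : ℤ) : ZMod 3)*((q 4 : ℤ) : ZMod 3) + ((q 0 : ℤ) : ZMod 3)*((q 5 : ℤ) : ZMod 3) + ((q 1 : ℤ) : ZMod 3)*((q 2 : ℤ) : ZMod 3) + ((q 1 : ℤ) : ZMod 3)*((q 3 : ℤ) : ZMod 3) + ((q 1 : ℤ) : ZMod 3)*((q 4 : ℤ) : ZMod 3) + ((q 1 : ℤ) : ZMod 3)*((q 5 : ℤ) : ZMod 3) + ((q 2 : ℤ) : ZMod 3)*((q 3 : ℤ) : ZMod 3) + ((q 2 : ℤ) : ZMod 3)*((q 4 : ℤ) : ZMod 3) + ((q 2 :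 ℤ) : ZMod 3)*((q 5 : ℤ) : ZMod 3) + ((q 3 : ℤ) : ZMod 3)*((q 4 : ℤ) : ZMod 3) + ((q 3 : ℤ) : ZMod 3)*((q 5 : ℤ) : ZMod 3) + ((q 4 : ℤ) : ZMod 3)*((q 5 : ℤ) : ZMod 3))) * h3
  rw [h1, hS, hT]
  have hsq : ((ε : ZMod 3) * ∑ i, ((q i : ℤ) : ZMod 3)) ^ 2 = (∑ i, ((q i : ℤ) : ZMod 3)) ^ 2 := by
    calc ((ε : ZMod 3) * ∑ i, ((q i : ℤ) : ZMod 3)) ^ 2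
        = ((ε : ZMod 3) * (ε : ZMod 3)) * (∑ i, ((q i : ℤ) : ZMod 3)) ^ 2 := by ring
    _ = (∑ i, ((q i : ℤ) : ZMod 3)) ^ 2 := by rw [hε2, one_mul]
  rw [hsq]

set_option maxHeartbeats 2000000 in
theorem p1_mod_twentyfour_cases (q : Fin 6 → ℤ) (h : BazaikinFree q) :
    ((-esymm 2 q ≡ 15 [ZMOD 24]) ↔
      (MatchesMod3 q ![1, 1, 1, 1, 1, 1] ∨ MatchesMod3 q ![1, 1, 1, 0, 0, 0])) ∧
    ((-esymm 2 q ≡ 7 [ZMOD 24]) ↔ MatchesMod3 q ![1, 1, 1, 1, 2, 0]) := by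
  obtain ⟨hsum, hodd, hgcd⟩ := h
  have hodd' : ∀ i, ∃ m, q i = 2*m+1 := hodd
  choose k hk using hodd'
  have hs6 : q 0 + q 1 + q 2 + q 3 + q 4 + q 5 = 0 := by
    rwa [Fin.sum_univ_six] at hsum
  have hexp := esymm_two_expand q
  -- mod 8 : always -esymm ≡ 7 [ZMOD 8]
  have hksum : k 0 + k 1 + k 2 + k 3 + k 4 + k 5 = -3 := by
    have e0 := hk 0; have e1 := hk 1; have e2 := hk 2
    have e3 := hk 3; have e4 := hk 4; have e5 := hk 5
    omega
  have hsum8 : (k 0 : ZMod 4) + k 1 + k 2 + k 3 + k 4 + k 5 = 1 := by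
    have hcc : ((k 0 + k 1 + k 2 + k 3 + k 4 + k 5 : ℤ) : ZMod 4) = ((-3 : ℤ) : ZMod 4) := by
      rw [hksum]
    push_cast at hcc
    rw [hcc]
    decide
  have h8 := bazaikin_key8 (k 0 : ZMod 4) (k 1) (k 2) (k 3) (k 4) (k 5) hsum8 ⟨clause4 (hk 0) (hk 1) (hk 2) (hk 3) (hgcd 0 1 2 3 (by decide) (by decide) (by decide) (by decide) (by decide) (by decide)), clause4 (hk 0) (hk 1) (hk 2) (hk 4) (hgcd 0 1 2 4 (by decide) (by decide) (by decide) (by decide) (by decide) (by decide)), clause4 (hk 0) (hk 1) (hk 2) (hk 5) (hgcd 0 1 2 5 (by decide) (by decide) (by decide) (by decide) (by decide) (by decide)), clause4 (hk 0) (hk 1) (hk 3) (hk 4) (hgcd 0 1 3 4 (by decide) (by decide) (by decide) (by decide) (by decide) (by decide)), clause4 (hk 0) (hk 1) (hk 3) (hk 5) (hgcd 0 1 3 5 (by decide) (by decide) (by decide) (by decide) (by decide) (by decide)), clause4 (hk 0) (hk 1) (hk 4) (hk 5) (hgcd 0 1 4 5 (by decide) (by decide) (by decide) (by decide) (by decide)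 (by decide)), clause4 (hk 0) (hk 2) (hk 1) (hk 3) (hgcd 0 2 1 3 (by decide) (by decide) (by decide) (by decide) (by decide) (by decide)), clause4 (hk 0) (hk 2) (hk 1) (hk 4) (hgcd 0 2 1 4 (by decide) (by decide) (by decide) (by decide) (by decide) (by decide)), clause4 (hk 0) (hk 2) (hk 1) (hk 5) (hgcd 0 2 1 5 (by decide) (by decide) (by decide) (by decide) (by decide) (by decide)), clause4 (hk 0) (hk 2) (hk 3) (hk 4) (hgcd 0 2 3 4 (by decide) (by decide) (by decide) (by decide) (by decide) (by decide)), clause4 (hk 0) (hk 2) (hk 3) (hk 5) (hgcd 0 2 3 5 (by decide) (by decide) (by decide) (by decide) (by decide) (by decide)), clause4 (hk 0) (hk 2) (hk 4) (hk 5) (hgcd 0 2 4 5 (by decide) (by decide) (by decide) (by decide) (by decide) (by decide)), clause4 (hk 0) (hk 3) (hk 1) (hk 2) (hgcd 0 3 1 2 (by decide) (by decide) (by decide) (by decide) (by decide) (by decide)), clause4 (hk 0) (hk 3) (hk 1) (hk 4) (hgcd 0 3 1 4 (by decide) (by decide) (by decide) (by decide) (by decide) (by decide)), clause4 (hk 0)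 (hk 3) (hk 1) (hk 5) (hgcd 0 3 1 5 (by decide) (by decide) (by decide) (by decide) (by decide) (by decide)), clause4 (hk 0) (hk 3) (hk 2) (hk 4) (hgcd 0 3 2 4 (by decide) (by decide) (by decide) (by decide) (by decide) (by decide)), clause4 (hk 0) (hk 3) (hk 2) (hk 5) (hgcd 0 3 2 5 (by decide) (by decide) (by decide) (by decide) (by decide) (by decide)), clause4 (hk 0) (hk 3) (hk 4) (hk 5) (hgcd 0 3 4 5 (by decide) (by decide) (by decide) (by decide) (by decide) (by decide)), clause4 (hk 0) (hk 4) (hk 1) (hk 2) (hgcd 0 4 1 2 (by decide) (by decide) (by decide) (by decide) (by decide) (by decide)), clause4 (hk 0) (hk 4) (hk 1) (hk 3) (hgcd 0 4 1 3 (by decide) (by decide) (by decide) (by decide) (by decide) (by decide)), clause4 (hk 0) (hk 4) (hk 1) (hk 5) (hgcd 0 4 1 5 (by decide) (by decide) (by decide) (by decide) (by decide) (by decide)), clause4 (hk 0) (hk 4) (hk 2) (hk 3) (hgcd 0 4 2 3 (by decide) (by decide) (by decide) (by decide) (by decide) (by decide)), clause4 (hk 0) (hk 4) (hk 2) (hk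 5) (hgcd 0 4 2 5 (by decide) (by decide) (by decide) (by decide) (by decide) (by decide)), clause4 (hk 0) (hk 4) (hk 3) (hk 5) (hgcd 0 4 3 5 (by decide) (by decide) (by decide) (by decide) (by decide) (by decide)), clause4 (hk 0) (hk 5) (hk 1) (hk 2) (hgcd 0 5 1 2 (by decide) (by decide) (by decide) (by decide) (by decide) (by decide)), clause4 (hk 0) (hk 5) (hk 1) (hk 3) (hgcd 0 5 1 3 (by decide) (by decide) (by decide) (by decide) (by decide) (by decide)), clause4 (hk 0) (hk 5) (hk 1) (hk 4) (hgcd 0 5 1 4 (by decide) (by decide) (by decide) (by decide) (by decide) (by decide)), clause4 (hk 0) (hk 5) (hk 2) (hk 3) (hgcd 0 5 2 3 (by decide) (by decide) (by decide) (by decide) (by decide) (by decide)), clause4 (hk 0) (hk 5) (hk 2) (hk 4) (hgcd 0 5 2 4 (by decide) (by decide) (by decide) (by decide) (by decide) (by decide)), clause4 (hk 0) (hk 5) (hk 3) (hk 4) (hgcd 0 5 3 4 (by decide) (by decide) (by decide) (by decide) (by decide) (by decide)), clause4 (hk 1) (hk 2) (hk 3) (hk 4) (hgcd 1 2 3 4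 (by decide) (by decide) (by decide) (by decide) (by decide) (by decide)), clause4 (hk 1) (hk 2) (hk 3) (hk 5) (hgcd 1 2 3 5 (by decide) (by decide) (by decide) (by decide) (by decide) (by decide)), clause4 (hk 1) (hk 2) (hk 4) (hk 5) (hgcd 1 2 4 5 (by decide) (by decide) (by decide) (by decide) (by decide) (by decide)), clause4 (hk 1) (hk 3) (hk 2) (hk 4) (hgcd 1 3 2 4 (by decide) (by decide) (by decide) (by decide) (by decide) (by decide)), clause4 (hk 1) (hk 3) (hk 2) (hk 5) (hgcd 1 3 2 5 (by decide) (by decide) (by decide) (by decide) (by decide) (by decide)), clause4 (hk 1) (hk 3) (hk 4) (hk 5) (hgcd 1 3 4 5 (by decide) (by decide) (by decide) (by decide) (by decide) (by decide)), clause4 (hk 1) (hk 4) (hk 2) (hk 3) (hgcd 1 4 2 3 (by decide) (by decide) (by decide) (by decide) (by decide) (by decide)), clause4 (hk 1) (hk 4) (hk 2) (hk 5) (hgcd 1 4 2 5 (by decide) (by decide) (by decide) (by decide) (by decide) (by decide)), clause4 (hk 1) (hk 4) (hk 3) (hk 5) (hgcd 1 4 3 5 (by decide) (by decide) (by decide)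 (by decide) (by decide) (by decide)), clause4 (hk 1) (hk 5) (hk 2) (hk 3) (hgcd 1 5 2 3 (by decide) (by decide) (by decide) (by decide) (by decide) (by decide)), clause4 (hk 1) (hk 5) (hk 2) (hk 4) (hgcd 1 5 2 4 (by decide) (by decide) (by decide) (by decide) (by decide) (by decide)), clause4 (hk 1) (hk 5) (hk 3) (hk 4) (hgcd 1 5 3 4 (by decide) (by decide) (by decide) (by decide) (by decide) (by decide)), clause4 (hk 2) (hk 3) (hk 4) (hk 5) (hgcd 2 3 4 5 (by decide) (by decide) (by decide) (by decide) (by decide) (by decide)), clause4 (hk 2) (hk 4) (hk 3) (hk 5) (hgcd 2 4 3 5 (by decide) (by decide) (by decide) (by decide) (by decide) (by decide)), clause4 (hk 2) (hk 5) (hk 3) (hk 4) (hgcd 2 5 3 4 (by decide) (by decide) (by decide) (by decide) (by decide) (by decide))⟩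
  have h8' : ((2*(k 0*k 1 + k 0*k 2 + k 0*k 3 + k 0*k 4 + k 0*k 5 + k 1*k 2 + k 1*k 3 + k 1*k 4 + k 1*k 5 + k 2*k 3 + k 2*k 4 + k 2*k 5 + k 3*k 4 + k 3*k 5 + k 4*k 5) + 5*(k 0 + k 1 + k 2 + k 3 + k 4 + k 5) : ℤ) : ZMod 4) = ((1:ℤ) : ZMod 4) := by
    push_cast
    linear_combination h8
  have h8mod := (ZMod.intCast_eq_intCast_iff' _ _ _).mp h8'
  have hE8 : esymm 2 q = 4*(k 0*k 1 + k 0*k 2 + k 0*k 3 + k 0*k 4 + k 0*k 5 + k 1*k 2 + k 1*k 3 + k 1*k 4 + k 1*k 5 + k 2*k 3 + k 2*k 4 + k 2*k 5 + k 3*k 4 + k 3*k 5 + k 4*k 5) + 10*(k 0 + k 1 + k 2 + k 3 + k 4 + k 5) + 15 := by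
    rw [hexp, hk 0, hk 1, hk 2, hk 3, hk 4, hk 5]
    ring
  have hm8 : (-esymm 2 q) % 8 = 7 % 8 := by omega
  -- mod 3 setup
  have hsum3 : ((q 0 : ℤ) : ZMod 3) + ((q 1 : ℤ) : ZMod 3) + ((q 2 : ℤ) : ZMod 3)
      + ((q 3 : ℤ) : ZMod 3) + ((q 4 : ℤ) : ZMod 3) + ((q 5 : ℤ) : ZMod 3) = 0 := by
    have hcc : ((q 0 + q 1 + q 2 + q 3 + q 4 + q 5 : ℤ) : ZMod 3) = ((0 : ℤ) : ZMod 3) := by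
      rw [hs6]
    push_cast at hcc
    exact hcc
  have h3 := bazaikin_key3 ((q 0 : ℤ) : ZMod 3) ((q 1 : ℤ) : ZMod 3) ((q 2 : ℤ) : ZMod 3)
    ((q 3 : ℤ) : ZMod 3) ((q 4 : ℤ) : ZMod 3) ((q 5 : ℤ) : ZMod 3) hsum3 ⟨clause3 (hgcd 0 1 2 3 (by decide) (by decide) (by decide) (by decide) (by decide) (by decide)), clause3 (hgcd 0 1 2 4 (by decide) (by decide) (by decide) (by decide) (by decide) (by decide)), clause3 (hgcd 0 1 2 5 (by decide) (by decide) (by decide) (by decide) (by decide) (by decide)), clause3 (hgcd 0 1 3 4 (by decide) (by decide) (by decide) (by decide) (by decide) (by decide)), clause3 (hgcd 0 1 3 5 (by decide) (by decide) (by decide) (by decide) (by decide) (by decide)), clause3 (hgcd 0 1 4 5 (by decide) (by decide) (by decide) (by decide) (by decide) (by decide)), clause3 (hgcd 0 2 1 3 (by decide) (by decide) (by decide) (by decide) (by decide) (by decide)), clause3 (hgcd 0 2 1 4 (by decide) (by decide) (by decide) (by decide) (by decide) (by decide)), clause3 (hgcd 0 2 1 5 (by decide) (by decide) (by decide) (by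 decide) (by decide) (by decide)), clause3 (hgcd 0 2 3 4 (by decide) (by decide) (by decide) (by decide) (by decide) (by decide)), clause3 (hgcd 0 2 3 5 (by decide) (by decide) (by decide) (by decide) (by decide) (by decide)), clause3 (hgcd 0 2 4 5 (by decide) (by decide) (by decide) (by decide) (by decide) (by decide)), clause3 (hgcd 0 3 1 2 (by decide) (by decide) (by decide) (by decide) (by decide) (by decide)), clause3 (hgcd 0 3 1 4 (by decide) (by decide) (by decide) (by decide) (by decide) (by decide)), clause3 (hgcd 0 3 1 5 (by decide) (by decide) (by decide) (by decide) (by decide) (by decide)), clause3 (hgcd 0 3 2 4 (by decide) (by decide) (by decide) (by decide) (by decide) (by decide)), clause3 (hgcd 0 3 2 5 (by decide) (by decide) (by decide) (by decide) (by decide) (by decide)), clause3 (hgcd 0 3 4 5 (by decide) (by decide) (by decide) (by decide) (by decide) (by decide)), clause3 (hgcd 0 4 1 2 (by decide) (by decide) (by decide) (by decide) (by decide) (by decide)), clause3 (hgcd 0 4 1 3 (by decide) (by decide) (by decide) (by decide) (by decide) (by decide)), clause3 (hgcd 0 4 1 5 (by decide) (by decide) (by decide) (by decide) (by decide) (by decide)),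 clause3 (hgcd 0 4 2 3 (by decide) (by decide) (by decide) (by decide) (by decide) (by decide)), clause3 (hgcd 0 4 2 5 (by decide) (by decide) (by decide) (by decide) (by decide) (by decide)), clause3 (hgcd 0 4 3 5 (by decide) (by decide) (by decide) (by decide) (by decide) (by decide)), clause3 (hgcd 0 5 1 2 (by decide) (by decide) (by decide) (by decide) (by decide) (by decide)), clause3 (hgcd 0 5 1 3 (by decide) (by decide) (by decide) (by decide) (by decide) (by decide)), clause3 (hgcd 0 5 1 4 (by decide) (by decide) (by decide) (by decide) (by decide) (by decide)), clause3 (hgcd 0 5 2 3 (by decide) (by decide) (by decide) (by decide) (by decide) (by decide)), clause3 (hgcd 0 5 2 4 (by decide) (by decide) (by decide) (by decide) (by decide) (by decide)), clause3 (hgcd 0 5 3 4 (by decide) (by decide) (by decide) (by decide) (by decide) (by decide)), clause3 (hgcd 1 2 3 4 (by decide) (by decide) (by decide) (by decide) (by decide) (by decide)), clause3 (hgcd 1 2 3 5 (by decide) (by decide) (by decide) (by decide) (by decide) (by decide)), clause3 (hgcd 1 2 4 5 (by decide) (by decide) (by decide) (by decide) (by decide) (by decide)), clause3 (hgcd 1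 3 2 4 (by decide) (by decide) (by decide) (by decide) (by decide) (by decide)), clause3 (hgcd 1 3 2 5 (by decide) (by decide) (by decide) (by decide) (by decide) (by decide)), clause3 (hgcd 1 3 4 5 (by decide) (by decide) (by decide) (by decide) (by decide) (by decide)), clause3 (hgcd 1 4 2 3 (by decide) (by decide) (by decide) (by decide) (by decide) (by decide)), clause3 (hgcd 1 4 2 5 (by decide) (by decide) (by decide) (by decide) (by decide) (by decide)), clause3 (hgcd 1 4 3 5 (by decide) (by decide) (by decide) (by decide) (by decide) (by decide)), clause3 (hgcd 1 5 2 3 (by decide) (by decide) (by decide) (by decide) (by decide) (by decide)), clause3 (hgcd 1 5 2 4 (by decide) (by decide) (by decide) (by decide) (by decide) (by decide)), clause3 (hgcd 1 5 3 4 (by decide) (by decide) (by decide) (by decide) (by decide) (by decide)), clause3 (hgcd 2 3 4 5 (by decide) (by decide) (by decide) (by decide) (by decide) (by decide)), clause3 (hgcd 2 4 3 5 (by decide) (by decide) (by decide) (by decide) (by decide) (by decide)), clause3 (hgcd 2 5 3 4 (by decide) (by decide) (by decide) (by decide) (by decide) (by decide))⟩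
  have hcast3 : ((esymm 2 q : ℤ) : ZMod 3) = ((q 0 : ℤ) : ZMod 3)*((q 1 : ℤ) : ZMod 3) + ((q 0 : ℤ) : ZMod 3)*((q 2 : ℤ) : ZMod 3) + ((q 0 : ℤ) : ZMod 3)*((q 3 : ℤ) : ZMod 3) + ((q 0 : ℤ) : ZMod 3)*((q 4 : ℤ) : ZMod 3) + ((q 0 : ℤ) : ZMod 3)*((q 5 : ℤ) : ZMod 3) + ((q 1 : ℤ) : ZMod 3)*((q 2 : ℤ) : ZMod 3) + ((q 1 : ℤ) : ZMod 3)*((q 3 : ℤ) : ZMod 3) + ((q 1 : ℤ) : ZMod 3)*((q 4 : ℤ) : ZMod 3) + ((q 1 : ℤ) : ZMod 3)*((q 5 : ℤ) : ZMod 3) + ((q 2 : ℤ) : ZMod 3)*((q 3 : ℤ) : ZMod 3) + ((q 2 : ℤ) : ZMod 3)*((q 4 : ℤ) : ZMod 3) + ((q 2 : ℤ) : ZMod 3)*((q 5 : ℤ) : ZMod 3) + ((q 3 : ℤ) : ZMod 3)*((q 4 : ℤ) : ZMod 3) + ((q 3 : ℤ) : ZMod 3)*((q 5 : ℤ) : ZMod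 3) + ((q 4 : ℤ) : ZMod 3)*((q 5 : ℤ) : ZMod 3) := by
    rw [hexp]; push_cast; ring
  have hv1 : 2 * ((∑ i, ((![1, 1, 1, 1, 1, 1] i : ℤ) : ZMod 3)) ^ 2
      - ∑ i, ((![1, 1, 1, 1, 1, 1] i : ℤ) : ZMod 3) ^ 2) = 0 := by decide
  have hv2 : 2 * ((∑ i, ((![1, 1, 1, 0, 0, 0] i : ℤ) : ZMod 3)) ^ 2
      - ∑ i, ((![1, 1, 1, 0, 0, 0] i : ℤ) : ZMod 3) ^ 2) = 0 := by decide
  have hv3 : 2 * ((∑ i, ((![1, 1, 1, 1, 2, 0] i : ℤ) : ZMod 3)) ^ 2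
      - ∑ i, ((![1, 1, 1, 1, 2, 0] i : ℤ) : ZMod 3) ^ 2) = 2 := by decide
  have hall : ∀ y : ZMod 3, y = 0 ∨ y = 1 ∨ y = 2 := by decide
  constructor
  · constructor
    · intro h15
      have h15' : (-esymm 2 q) % 24 = 15 % 24 := h15
      have hq3 : ((esymm 2 q : ℤ) : ZMod 3) = ((0 : ℤ) : ZMod 3) :=
        (ZMod.intCast_eq_intCast_iff' _ _ 3).mpr (by push_cast; omega)
      rw [hcast3] at hq3
      norm_num at hq3
      rcases h3 with ⟨he2, hcnt⟩ | ⟨he2, hcnt⟩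
      · rcases hcnt with ⟨c0, c1, c2⟩ | ⟨c0, c1, c2⟩ | ⟨c0, c1, c2⟩ | ⟨c0, c1, c2⟩
        · left
          refine match_of_counts q ![1, 1, 1, 1, 1, 1] 1 (Or.inl rfl) ?_
          intro x
          rcases hall x with rfl | rfl | rfl <;>
            rw [Finset.card_filter, Finset.card_filter, Fin.sum_univ_six, Fin.sum_univ_six] <;>
            simp only [Int.cast_one, one_mul] <;>
            first | (rw [c0]; decide) | (rw [c1]; decide) | (rw [c2]; decide)
        · left
          refine match_of_counts q ![1, 1, 1, 1, 1, 1] (-1) (Or.inr rfl) ?_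
          intro x
          rcases hall x with rfl | rfl | rfl <;>
            rw [Finset.card_filter, Finset.card_filter, Fin.sum_univ_six, Fin.sum_univ_six] <;>
            simp only [Int.cast_neg, Int.cast_one, neg_mul, one_mul] <;>
            simp only [show ∀ a x : ZMod 3, (-a = x) ↔ (a = -x) from by decide] <;>
            simp only [show -(0 : ZMod 3) = 0 from by decide, show -(1 : ZMod 3) = 2 from by decide,
              show -(2 : ZMod 3) = 1 from by decide] <;>
            first | (rw [c0]; decide) | (rw [c1]; decide) | (rw [c2]; decide)
        · right
          refine match_of_counts q ![1, 1, 1, 0, 0, 0] 1 (Or.inl rfl) ?_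
          intro x
          rcases hall x with rfl | rfl | rfl <;>
            rw [Finset.card_filter, Finset.card_filter, Fin.sum_univ_six, Fin.sum_univ_six] <;>
            simp only [Int.cast_one, one_mul] <;>
            first | (rw [c0]; decide) | (rw [c1]; decide) | (rw [c2]; decide)
        · right
          refine match_of_counts q ![1, 1, 1, 0, 0, 0] (-1) (Or.inr rfl) ?_
          intro x
          rcases hall x with rfl | rfl | rfl <;>
            rw [Finset.card_filter, Finset.card_filter, Fin.sum_univ_six, Fin.sum_univ_six] <;>
            simp only [Int.cast_neg, Int.cast_one, neg_mul, one_mul] <;>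
            simp only [show ∀ a x : ZMod 3, (-a = x) ↔ (a = -x) from by decide] <;>
            simp only [show -(0 : ZMod 3) = 0 from by decide, show -(1 : ZMod 3) = 2 from by decide,
              show -(2 : ZMod 3) = 1 from by decide] <;>
            first | (rw [c0]; decide) | (rw [c1]; decide) | (rw [c2]; decide)
      · rw [hq3] at he2
        exact absurd he2 (by decide)
    · intro hm
      have hE3 : esymm 2 q % ((3:ℕ):ℤ) = 0 % ((3:ℕ):ℤ) := by
        rcases hm with hm | hm
        · have hcm := esymm_mod3_of_match q ![1, 1, 1, 1, 1, 1] hm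
          rw [hv1] at hcm
          exact (ZMod.intCast_eq_intCast_iff' (esymm 2 q) 0 3).mp (by rw [hcm]; norm_num)
        · have hcm := esymm_mod3_of_match q ![1, 1, 1, 0, 0, 0] hm
          rw [hv2] at hcm
          exact (ZMod.intCast_eq_intCast_iff' (esymm 2 q) 0 3).mp (by rw [hcm]; norm_num)
      show (-esymm 2 q) % 24 = 15 % 24
      omega
  · constructor
    · intro h7
      have h7' : (-esymm 2 q) % 24 = 7 % 24 := h7
      have hq3 : ((esymm 2 q : ℤ) : ZMod 3) = ((2 : ℤ) : ZMod 3) :=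
        (ZMod.intCast_eq_intCast_iff' _ _ 3).mpr (by push_cast; omega)
      rw [hcast3] at hq3
      norm_num at hq3
      rcases h3 with ⟨he2, hcnt⟩ | ⟨he2, hcnt⟩
      · rw [hq3] at he2
        exact absurd he2 (by decide)
      · rcases hcnt with ⟨c0, c1, c2⟩ | ⟨c0, c1, c2⟩
        · refine match_of_counts q ![1, 1, 1, 1, 2, 0] 1 (Or.inl rfl) ?_
          intro x
          rcases hall x with rfl | rfl | rfl <;>
            rw [Finset.card_filter, Finset.card_filter, Fin.sum_univ_six, Fin.sum_univ_six] <;>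
            simp only [Int.cast_one, one_mul] <;>
            first | (rw [c0]; decide) | (rw [c1]; decide) | (rw [c2]; decide)
        · refine match_of_counts q ![1, 1, 1, 1, 2, 0] (-1) (Or.inr rfl) ?_
          intro x
          rcases hall x with rfl | rfl | rfl <;>
            rw [Finset.card_filter, Finset.card_filter, Fin.sum_univ_six, Fin.sum_univ_six] <;>
            simp only [Int.cast_neg, Int.cast_one, neg_mul, one_mul] <;>
            simp only [show ∀ a x : ZMod 3, (-a = x) ↔ (a = -x) from by decide] <;>
            simp only [show -(0 : ZMod 3) = 0 from by decide, show -(1 : ZMod 3) = 2 from by decide,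
              show -(2 : ZMod 3) = 1 from by decide] <;>
            first | (rw [c0]; decide) | (rw [c1]; decide) | (rw [c2]; decide)
    · intro hm
      have hcm := esymm_mod3_of_match q ![1, 1, 1, 1, 2, 0] hm
      rw [hv3] at hcm
      have hE3 : esymm 2 q % ((3:ℕ):ℤ) = 2 % ((3:ℕ):ℤ) :=
        (ZMod.intCast_eq_intCast_iff' (esymm 2 q) 2 3).mp (by rw [hcm]; norm_num)
      show (-esymm 2 q) % 24 = 7 % 24
      omega
end

section
/- Let q = (q_0, ..., q_5) ∈ ℤ^6 satisfy the Bazaikin freeness condition, and let s be the positive integer with 8s = |σ_3(q)|. Then s ≡ 1 (mod 6) or s ≡ 5 (mod 6). (This is Corollary 3.2(b): the order s of H^6(B_q) = ℤ_s satisfies s ≡ ±1 mod 6.) -/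
/-!
By Newton's identity, `∑ qᵢ = 0` gives `3 σ₃(q) = ∑ qᵢ³`. Write `qᵢ ≡ rᵢ (mod 3)` with
`rᵢ ∈ {-1, 0, 1}` and `qᵢ ≡ uᵢ (mod 4)` with `uᵢ = ±1`; then `∑ qᵢ³ ≡ ∑ rᵢ (mod 9)` and
`∑ qᵢ³ ≡ -2 ∑ uᵢ (mod 16)`. If `∑ rᵢ` (or `∑ uᵢ`) vanished, the residues could be matched into
pairs of zero sum, giving two disjoint pairs `qₐ + q_b`, `q_c + q_d` both divisible by 3 (or 4),
against the gcd condition. As these sums lie in `[-6, 6]` and `4 ∣ ∑ uᵢ`, neither `9` nor `16`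
divides `3 σ₃(q) = ± 24 s`, so `s` is prime to 6.
-/

open Finset

theorem eval_esymm {n : ℕ} (k : ℕ) (q : Fin n → ℤ) :
    MvPolynomial.eval q (MvPolynomial.esymm (Fin n) ℤ k) = esymm k q := by
  simp [MvPolynomial.esymm, esymm]

theorem three_mul_esymm_three {n : ℕ} (q : Fin n → ℤ) (hq : ∑ i, q i = 0) :
    3 * esymm 3 q = ∑ i, q i ^ 3 := by
  have newton := congrArg (MvPolynomial.aeval q) (MvPolynomial.mul_esymm_eq_sum (Fin n) ℤ 3)
  simpa [sum_filter, Nat.antidiagonal_succ, hq, eval_esymm, MvPolynomial.psum] using newton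

section ZeroSumPairs

variable {ι : Type*} {u : ι → ℤ}

theorem exists_ne_add_eq_zero_of_sum_eq_zero {s : Finset ι} (hs : 1 < #s)
    (hu : ∀ i ∈ s, u i = -1 ∨ u i = 0 ∨ u i = 1) (hsum : ∑ i ∈ s, u i = 0) :
    ∃ a ∈ s, ∃ b ∈ s, a ≠ b ∧ u a + u b = 0 := by
  by_cases hpos : ∃ a ∈ s, u a = 1
  · by_cases hneg : ∃ b ∈ s, u b = -1
    · obtain ⟨a, ha, hua⟩ := hpos
      obtain ⟨b, hb, hub⟩ := hneg
      exact ⟨a, ha, b, hb, by rintro rfl; omega, by omega⟩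
    · push Not at hneg
      have hnonneg : ∀ i ∈ s, 0 ≤ u i := fun i hi => by have := hu i hi; have := hneg i hi; omega
      obtain ⟨a, ha, hua⟩ := hpos
      have := (sum_eq_zero_iff_of_nonneg hnonneg).1 hsum a ha
      omega
  · push Not at hpos
    have hnonpos : ∀ i ∈ s, u i ≤ 0 := fun i hi => by have := hu i hi; have := hpos i hi; omega
    have hzero := (sum_eq_zero_iff_of_nonpos hnonpos).1 hsum
    obtain ⟨a, ha, b, hb, hab⟩ := one_lt_card.1 hs
    exact ⟨a, ha, b, hb, hab, by rw [hzero a ha, hzero b hb, add_zero]⟩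

theorem exists_two_disjoint_pairs_add_eq_zero [Fintype ι] [DecidableEq ι]
    (hι : 4 ≤ Fintype.card ι) (hu : ∀ i, u i = -1 ∨ u i = 0 ∨ u i = 1)
    (hsum : ∑ i, u i = 0) :
    ∃ a b c d : ι, a ≠ b ∧ a ≠ c ∧ a ≠ d ∧ b ≠ c ∧ b ≠ d ∧ c ≠ d ∧
      u a + u b = 0 ∧ u c + u d = 0 := by
  obtain ⟨a, -, b, -, hab, hab0⟩ :=
    exists_ne_add_eq_zero_of_sum_eq_zero (s := univ) (by rw [card_univ]; omega)
      (fun i _ => hu i) hsum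
  have hb : b ∈ univ.erase a := mem_erase.2 ⟨hab.symm, mem_univ b⟩
  have hcard : 1 < #((univ.erase a).erase b) := by
    rw [card_erase_of_mem hb, card_erase_of_mem (mem_univ a), card_univ]; omega
  have hrest : ∑ i ∈ (univ.erase a).erase b, u i = 0 := by
    have := add_sum_erase _ u hb
    rw [← add_sum_erase _ u (mem_univ a), ← this] at hsum
    omega
  obtain ⟨c, hc, d, hd, hcd, hcd0⟩ :=
    exists_ne_add_eq_zero_of_sum_eq_zero hcard (fun i _ => hu i) hrest
  simp only [mem_erase, mem_univ, and_true] at hc hd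
  exact ⟨a, b, c, d, hab, hc.2.symm, hd.2.symm, hc.1.symm, hd.1.symm, hcd, hab0, hcd0⟩

end ZeroSumPairs

theorem Int.exists_modEq_three (x : ℤ) : ∃ r, (r = -1 ∨ r = 0 ∨ r = 1) ∧ x ≡ r [ZMOD 3] := by
  rcases (by omega : x % 3 = 0 ∨ x % 3 = 1 ∨ x % 3 = 2) with h | h | h
  · exact ⟨0, by simp, h⟩
  · exact ⟨1, by simp, h⟩
  · exact ⟨-1, by simp, by unfold Int.ModEq; omega⟩

theorem Int.exists_modEq_four_of_odd {x : ℤ} (hx : Odd x) :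
    ∃ u, (u = 1 ∨ u = -1) ∧ x ≡ u [ZMOD 4] := by
  obtain ⟨k, rfl⟩ := hx
  rcases Int.emod_two_eq_zero_or_one k with h | h
  · exact ⟨1, by simp, by unfold Int.ModEq; omega⟩
  · exact ⟨-1, by simp, by unfold Int.ModEq; omega⟩

theorem Int.pow_three_modEq_nine {q u : ℤ} (hu : u = -1 ∨ u = 0 ∨ u = 1) (h : q ≡ u [ZMOD 3]) :
    q ^ 3 ≡ u [ZMOD 9] := by
  obtain ⟨w, hw⟩ := h.symm.dvd
  have hu3 : u ^ 3 = u := by rcases hu with rfl | rfl | rfl <;> norm_num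
  refine (Int.modEq_iff_dvd.2 ⟨u ^ 2 * w + 3 * u * w ^ 2 + 3 * w ^ 3, ?_⟩).symm
  rw [show q = u + 3 * w by omega]
  linear_combination hu3

theorem Int.pow_three_modEq_sixteen {q u : ℤ} (hu : u = 1 ∨ u = -1) (h : q ≡ u [ZMOD 4]) :
    q ^ 3 ≡ 3 * q - 2 * u [ZMOD 16] := by
  obtain ⟨w, hw⟩ := h.symm.dvd
  have hu2 : u ^ 2 = 1 := by rcases hu with rfl | rfl <;> norm_num
  refine (Int.modEq_iff_dvd.2 ⟨3 * u * w ^ 2 + 4 * w ^ 3, ?_⟩).symm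
  rw [show q = u + 4 * w by omega]
  linear_combination (u + 12 * w) * hu2

namespace BazaikinFree

variable {q : Fin 6 → ℤ}

theorem not_dvd_and_dvd (h : BazaikinFree q) {m : ℤ} (hm : ¬ m ∣ 2) {a b c d : Fin 6}
    (hab : a ≠ b) (hac : a ≠ c) (had : a ≠ d) (hbc : b ≠ c) (hbd : b ≠ d) (hcd : c ≠ d) :
    ¬ (m ∣ q a + q b ∧ m ∣ q c + q d) := by
  rintro ⟨h₁, h₂⟩
  have := Int.dvd_coe_gcd h₁ h₂
  rw [h.2.2 a b c d hab hac had hbc hbd hcd] at this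
  exact hm this

theorem sum_ne_zero_of_modEq (h : BazaikinFree q) {m : ℤ} (hm : ¬ m ∣ 2) {u : Fin 6 → ℤ}
    (hu : ∀ i, u i = -1 ∨ u i = 0 ∨ u i = 1) (hqu : ∀ i, q i ≡ u i [ZMOD m]) :
    ∑ i, u i ≠ 0 := by
  intro hsum
  obtain ⟨a, b, c, d, hab, hac, had, hbc, hbd, hcd, hab0, hcd0⟩ :=
    exists_two_disjoint_pairs_add_eq_zero (by simp) hu hsum
  refine h.not_dvd_and_dvd hm hab hac had hbc hbd hcd ⟨?_, ?_⟩
  · exact Int.modEq_zero_iff_dvd.1 (hab0 ▸ (hqu a).add (hqu b))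
  · exact Int.modEq_zero_iff_dvd.1 (hcd0 ▸ (hqu c).add (hqu d))

theorem not_three_dvd_esymm_three (h : BazaikinFree q) : ¬ 3 ∣ esymm 3 q := by
  choose r hr hqr using fun i => Int.exists_modEq_three (q i)
  have hne := h.sum_ne_zero_of_modEq (by norm_num) hr hqr
  have hcube : ∑ i, q i ^ 3 ≡ ∑ i, r i [ZMOD 9] :=
    Int.ModEq.sum fun i _ => Int.pow_three_modEq_nine (hr i) (hqr i)
  have hle : ∑ i, r i ≤ ∑ _i : Fin 6, 1 := sum_le_sum fun i _ => by have := hr i; omega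
  have hge : ∑ _i : Fin 6, -1 ≤ ∑ i, r i := sum_le_sum fun i _ => by have := hr i; omega
  rw [← three_mul_esymm_three q h.1] at hcube
  simp only [sum_const, card_univ, Fintype.card_fin, nsmul_eq_mul] at hle hge
  unfold Int.ModEq at hcube
  omega

theorem not_sixteen_dvd_esymm_three (h : BazaikinFree q) : ¬ 16 ∣ esymm 3 q := by
  choose u hu hqu using fun i => Int.exists_modEq_four_of_odd (h.2.1 i)
  have hne := h.sum_ne_zero_of_modEq (by norm_num)
    (fun i => by rcases hu i with hi | hi <;> simp [hi]) hqu
  have hsum : ∑ i, q i ≡ ∑ i, u i [ZMOD 4] := Int.ModEq.sum fun i _ => hqu i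
  have hcube : ∑ i, q i ^ 3 ≡ ∑ i, (3 * q i - 2 * u i) [ZMOD 16] :=
    Int.ModEq.sum fun i _ => Int.pow_three_modEq_sixteen (hu i) (hqu i)
  have hle : ∑ i, u i ≤ ∑ _i : Fin 6, 1 := sum_le_sum fun i _ => by have := hu i; omega
  have hge : ∑ _i : Fin 6, -1 ≤ ∑ i, u i := sum_le_sum fun i _ => by have := hu i; omega
  rw [← three_mul_esymm_three q h.1, sum_sub_distrib, ← mul_sum, ← mul_sum, h.1] at hcube
  rw [h.1] at hsum
  simp only [sum_const, card_univ, Fintype.card_fin, nsmul_eq_mul] at hle hge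
  unfold Int.ModEq at hcube hsum
  omega

end BazaikinFree

theorem order_mod_six (q : Fin 6 → ℤ) (h : BazaikinFree q) (s : ℤ)
    (hs : 8 * s = |esymm 3 q|) :
    (s ≡ 1 [ZMOD 6]) ∨ (s ≡ 5 [ZMOD 6]) := by
  have h16 : ¬ 16 ∣ 8 * s := by rw [hs, dvd_abs]; exact h.not_sixteen_dvd_esymm_three
  have h3 : ¬ 3 ∣ 8 * s := by rw [hs, dvd_abs]; exact h.not_three_dvd_esymm_three
  unfold Int.ModEq
  omega
end

section
/- Let q = (q_0, ..., q_5) ∈ ℤ^6 satisfy the Bazaikin freeness condition. Then 5 divides σ_3(q) if and only if there exist ε ∈ {1, 2} and a sign δ ∈ {+1, −1} such that, up to reordering, δq ≡ (ε, ε, ε, ε, ε, 0) (mod 5). (Equivalently: the order s with 8s = |σ_3(q)| satisfies s ≡ 0 mod 5 if and only if q mod 5 = ±(ε,ε,ε,ε,ε,0) up to order.) -/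
/-! Work with the residues `r i = q i mod 5`. Since `∑ q i = 0`, Newton's identity gives
`3 σ₃ = ∑ q i ^ 3`, so `5 ∣ σ₃` iff `∑ r i ^ 3 = 0`; freeness says that no two disjoint pairs of
residues both sum to `0`. As `y` and `y ^ 3` span the odd functions on `ZMod 5`, the vanishing of
`∑ r i` and `∑ r i ^ 3` makes every nonzero residue `x` occur as often as `-x` modulo `5`. In a
family without zero-sum pairs one of these two counts is `0`, so every nonzero residue occurs a
multiple of `5` times: six such residues are five equal nonzero ones and a `0`. A single
zero-sum pair is impossible, since the other four residues would form such a family. -/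

open Finset

theorem three_mul_esymm_three_eq_sum_pow_three {n : ℕ} (q : Fin n → ℤ) (h : ∑ i, q i = 0) :
    3 * esymm 3 q = ∑ i, q i ^ 3 := by
  have newton := congrArg (MvPolynomial.eval q) (MvPolynomial.mul_esymm_eq_sum (Fin n) ℤ 3)
  have eval_esymm (k : ℕ) : MvPolynomial.eval q (MvPolynomial.esymm (Fin n) ℤ k) = esymm k q := by
    simp [MvPolynomial.esymm, esymm]
  have eval_psum (k : ℕ) : MvPolynomial.eval q (MvPolynomial.psum (Fin n) ℤ k) = ∑ i, q i ^ k := by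
    simp [MvPolynomial.psum]
  simpa [sum_filter, Finset.Nat.antidiagonal_succ, eval_esymm, eval_psum, h] using newton

theorem five_dvd_esymm_three_iff {n : ℕ} (q : Fin n → ℤ) (h : ∑ i, q i = 0) :
    5 ∣ esymm 3 q ↔ ∑ i, (q i : ZMod 5) ^ 3 = 0 := by
  have hcast := congrArg (Int.cast : ℤ → ZMod 5) (three_mul_esymm_three_eq_sum_pow_three q h)
  push_cast at hcast
  have three_ne_zero : (3 : ZMod 5) ≠ 0 := by decide
  have : Fact (Nat.Prime 5) := ⟨by norm_num⟩
  rw [← hcast, mul_eq_zero, or_iff_right three_ne_zero]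
  exact_mod_cast (ZMod.intCast_zmod_eq_zero_iff_dvd _ 5).symm

namespace BazaikinFree

variable {q : Fin 6 → ℤ}

theorem sum_intCast_eq_zero (h : BazaikinFree q) (n : ℕ) : ∑ i, (q i : ZMod n) = 0 := by
  rw [← Int.cast_sum, h.1, Int.cast_zero]

theorem not_intCast_add_eq_zero_and (h : BazaikinFree q) {n : ℕ} (hn : ¬(n : ℤ) ∣ 2)
    (a b c d : Fin 6) (hab : a ≠ b) (hac : a ≠ c) (had : a ≠ d) (hbc : b ≠ c) (hbd : b ≠ d)
    (hcd : c ≠ d) : ¬((q a : ZMod n) + q b = 0 ∧ (q c : ZMod n) + q d = 0) := by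
  rintro ⟨hab0, hcd0⟩
  norm_cast at hab0 hcd0
  rw [ZMod.intCast_zmod_eq_zero_iff_dvd] at hab0 hcd0
  have := Int.dvd_coe_gcd hab0 hcd0
  rw [h.2.2 a b c d hab hac had hbc hbd hcd] at this
  exact hn this

end BazaikinFree

def ZeroSumPairFree {ι R : Type*} [Add R] [Zero R] (s : Finset ι) (r : ι → R) : Prop :=
  ∀ i ∈ s, ∀ j ∈ s, i ≠ j → r i + r j ≠ 0

namespace ZeroSumPairFree

variable {ι R : Type*} {s : Finset ι}

theorem card_filter_eq_zero_le_one [AddZeroClass R] [DecidableEq R] {r : ι → R}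
    (hfree : ZeroSumPairFree s r) : #{i ∈ s | r i = 0} ≤ 1 := by
  refine card_le_one.mpr fun i hi j hj => ?_
  rw [mem_filter] at hi hj
  by_contra hij
  exact hfree i hi.1 j hj.1 hij (by rw [hi.2, hj.2, add_zero])

theorem exists_ne_zero [AddZeroClass R] [DecidableEq R] {r : ι → R}
    (hfree : ZeroSumPairFree s r) (hs : 2 ≤ #s) : ∃ k ∈ s, r k ≠ 0 := by
  by_contra! hzero
  have : #s ≤ #{i ∈ s | r i = 0} := by rw [filter_true_of_mem hzero]
  have := hfree.card_filter_eq_zero_le_one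
  omega

end ZeroSumPairFree

namespace ZMod

theorem exists_ite_sub_ite_neg_eq (x : ZMod 5) (hx : x ≠ 0) :
    ∃ a b : ZMod 5, ∀ y : ZMod 5,
      ((if y = x then 1 else 0) - (if y = -x then 1 else 0) : ZMod 5) = a * y + b * y ^ 3 := by
  revert x
  decide

theorem exists_sign_mul_eq_one_or_two (c : ZMod 5) (hc : c ≠ 0) :
    ∃ ε δ : ℤ, (ε = 1 ∨ ε = 2) ∧ (δ = 1 ∨ δ = -1) ∧ (δ : ZMod 5) * c = ε := by
  fin_cases c
  · exact absurd rfl hc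
  · exact ⟨1, 1, by decide⟩
  · exact ⟨2, 1, by decide⟩
  · exact ⟨2, -1, by decide⟩
  · exact ⟨1, -1, by decide⟩

end ZMod

section

variable {ι : Type*} {s : Finset ι} {r : ι → ZMod 5}

theorem natCast_card_filter_eq_eq_neg (h1 : ∑ i ∈ s, r i = 0) (h3 : ∑ i ∈ s, r i ^ 3 = 0)
    {x : ZMod 5} (hx : x ≠ 0) :
    ((#{i ∈ s | r i = x} : ℕ) : ZMod 5) = #{i ∈ s | r i = -x} := by
  obtain ⟨a, b, hab⟩ := ZMod.exists_ite_sub_ite_neg_eq x hx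
  rw [← sub_eq_zero]
  calc ((#{i ∈ s | r i = x} : ℕ) : ZMod 5) - #{i ∈ s | r i = -x}
      = ∑ i ∈ s, ((if r i = x then 1 else 0) - (if r i = -x then 1 else 0)) := by
        rw [sum_sub_distrib, sum_boole, sum_boole]
    _ = a * ∑ i ∈ s, r i + b * ∑ i ∈ s, r i ^ 3 := by
        simp only [hab, sum_add_distrib, mul_sum]
    _ = 0 := by rw [h1, h3, mul_zero, mul_zero, add_zero]

namespace ZeroSumPairFree

theorem five_dvd_card_filter_eq (hfree : ZeroSumPairFree s r) (h1 : ∑ i ∈ s, r i = 0)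
    (h3 : ∑ i ∈ s, r i ^ 3 = 0) {x : ZMod 5} (hx : x ≠ 0) : 5 ∣ #{i ∈ s | r i = x} := by
  by_cases hneg : #{i ∈ s | r i = -x} = 0
  · rw [← ZMod.natCast_eq_zero_iff, natCast_card_filter_eq_eq_neg h1 h3 hx, hneg, Nat.cast_zero]
  · obtain ⟨j, hj⟩ := card_pos.mp (Nat.pos_of_ne_zero hneg)
    rw [mem_filter] at hj
    suffices #{i ∈ s | r i = x} = 0 by rw [this]; exact dvd_zero 5
    refine card_eq_zero.mpr (filter_eq_empty_iff.mpr fun i hi hix => ?_)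
    refine hfree i hi j hj.1 (fun hij => ZMod.ne_neg_self (by decide) hx ?_)
      (by rw [hix, hj.2, add_neg_cancel])
    rw [← hj.2, ← hij, hix]

theorem five_le_card_filter_eq (hfree : ZeroSumPairFree s r) (h1 : ∑ i ∈ s, r i = 0)
    (h3 : ∑ i ∈ s, r i ^ 3 = 0) {k : ι} (hk : k ∈ s) (hrk : r k ≠ 0) :
    5 ≤ #{i ∈ s | r i = r k} :=
  Nat.le_of_dvd (card_pos.mpr ⟨k, mem_filter.mpr ⟨hk, rfl⟩⟩)
    (hfree.five_dvd_card_filter_eq h1 h3 hrk)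

theorem five_le_card (hfree : ZeroSumPairFree s r) (h1 : ∑ i ∈ s, r i = 0)
    (h3 : ∑ i ∈ s, r i ^ 3 = 0) (hs : 2 ≤ #s) : 5 ≤ #s := by
  obtain ⟨k, hk, hrk⟩ := hfree.exists_ne_zero hs
  exact (hfree.five_le_card_filter_eq h1 h3 hk hrk).trans (card_filter_le _ _)

end ZeroSumPairFree

end

section

variable {ι : Type*} [Fintype ι] [DecidableEq ι] {r : ι → ZMod 5}

theorem ZeroSumPairFree.exists_eq_ite (hfree : ZeroSumPairFree univ r)
    (hcard : Fintype.card ι = 6) (h1 : ∑ i, r i = 0) (h3 : ∑ i, r i ^ 3 = 0) :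
    ∃ j c, c ≠ 0 ∧ ∀ k, r k = if k = j then 0 else c := by
  obtain ⟨k, -, hk⟩ := hfree.exists_ne_zero (by rw [card_univ]; omega)
  have hF : #{i ∈ univ | r i = r k} = 5 := by
    have h5 := hfree.five_le_card_filter_eq h1 h3 (mem_univ k) hk
    have hdvd := hfree.five_dvd_card_filter_eq h1 h3 hk
    have hle := card_le_univ ({i ∈ univ | r i = r k} : Finset ι)
    omega
  obtain ⟨j, hj⟩ := card_eq_one.mp
    (show #({i ∈ univ | r i = r k} : Finset ι)ᶜ = 1 by rw [card_compl, hF, hcard])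
  have eq_rk_iff (i : ι) : r i = r k ↔ i ≠ j := by
    rw [iff_comm]
    simpa [not_iff_comm] using congrArg (i ∈ ·) hj
  refine ⟨j, r k, hk, fun i => ?_⟩
  split_ifs with hij
  · subst hij
    by_contra hi
    have hfib : ({l ∈ univ | r l = r i} : Finset ι) ⊆ {i} := fun l hl => by
      by_contra hli
      have hlk := (eq_rk_iff l).mpr (mt mem_singleton.mpr hli)
      exact (eq_rk_iff i).mp ((mem_filter.mp hl).2.symm.trans hlk) rfl
    have hle := card_le_card hfib
    have h5 := hfree.five_le_card_filter_eq h1 h3 (mem_univ i) hi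
    rw [card_singleton] at hle
    omega
  · exact (eq_rk_iff i).mpr hij

theorem sum_pow_three_eq_zero_iff (hcard : Fintype.card ι = 6) (h1 : ∑ i, r i = 0)
    (hpairs : ∀ a b c d : ι, a ≠ b → a ≠ c → a ≠ d → b ≠ c → b ≠ d → c ≠ d →
      ¬(r a + r b = 0 ∧ r c + r d = 0)) :
    ∑ i, r i ^ 3 = 0 ↔ ∃ j c, c ≠ 0 ∧ ∀ k, r k = if k = j then 0 else c := by
  constructor
  · intro h3
    by_cases hfree : ZeroSumPairFree univ r
    · exact hfree.exists_eq_ite hcard h1 h3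
    obtain ⟨a, -, b, -, hab, hab0⟩ : ∃ a ∈ univ, ∃ b ∈ univ, a ≠ b ∧ r a + r b = 0 := by
      simpa [ZeroSumPairFree] using hfree
    have sum_compl (f : ι → ZMod 5) (hf : f a + f b = 0) : ∑ i ∈ univ \ {a, b}, f i = ∑ i, f i := by
      rw [← sum_sdiff (subset_univ {a, b}), sum_pair hab, hf, add_zero]
    have hfree' : ZeroSumPairFree (univ \ {a, b}) r := fun c hc d hd hcd hcd0 => by
      simp only [mem_sdiff, mem_univ, mem_insert, mem_singleton, true_and, not_or] at hc hd
      exact hpairs a b c d hab (Ne.symm hc.1) (Ne.symm hd.1) (Ne.symm hc.2) (Ne.symm hd.2) hcd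
        ⟨hab0, hcd0⟩
    have hcube : r a ^ 3 + r b ^ 3 = 0 := by rw [eq_neg_of_add_eq_zero_right hab0]; ring
    have hcard' : #(univ \ {a, b}) = 4 := by
      rw [card_sdiff_of_subset (subset_univ _), card_pair hab, card_univ, hcard]
    have := hfree'.five_le_card (by rw [sum_compl r hab0, h1]) (by rw [sum_compl _ hcube, h3])
      (by omega)
    omega
  · rintro ⟨j, c, -, hr⟩
    simp [hr, ite_pow, sum_ite, filter_ne', hcard, show (5 : ZMod 5) = 0 from rfl]

end

theorem exists_perm_sign_mul_modEq_iff (q : Fin 6 → ℤ) :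
    (∃ (σ : Equiv.Perm (Fin 6)) (ε δ : ℤ), (ε = 1 ∨ ε = 2) ∧ (δ = 1 ∨ δ = -1) ∧
        ∀ i : Fin 6, δ * q (σ i) ≡ (if (i : ℕ) < 5 then ε else 0) [ZMOD 5]) ↔
      ∃ j c, c ≠ 0 ∧ ∀ k, (q k : ZMod 5) = if k = j then 0 else c := by
  have lt_five_iff (i : Fin 6) : (i : ℕ) < 5 ↔ ¬i = 5 := by
    rw [Fin.ext_iff]
    omega
  have modEq_iff (a b : ℤ) : a ≡ b [ZMOD 5] ↔ (a : ZMod 5) = b := by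
    exact_mod_cast (ZMod.intCast_eq_intCast_iff a b 5).symm
  simp only [modEq_iff, Int.cast_mul, apply_ite (Int.cast : ℤ → ZMod 5), Int.cast_zero,
    lt_five_iff, ite_not]
  constructor
  · rintro ⟨σ, ε, δ, hε, hδ, h⟩
    refine ⟨σ 5, δ * ε, by rcases hε with rfl | rfl <;> rcases hδ with rfl | rfl <;> decide,
      fun k => ?_⟩
    obtain ⟨i, rfl⟩ := σ.surjective k
    have hδ2 : (δ : ZMod 5) * δ = 1 := by rcases hδ with rfl | rfl <;> decide
    have hi := h i
    simp only [σ.injective.eq_iff]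
    split_ifs at hi ⊢ <;> linear_combination (δ : ZMod 5) * hi - (q (σ i) : ZMod 5) * hδ2
  · rintro ⟨j, c, hc, hr⟩
    obtain ⟨ε, δ, hε, hδ, hδc⟩ := ZMod.exists_sign_mul_eq_one_or_two c hc
    refine ⟨Equiv.swap 5 j, ε, δ, hε, hδ, fun i => ?_⟩
    simp only [hr, Equiv.swap_apply_eq_iff, Equiv.swap_apply_right]
    split_ifs <;> simp [hδc]

theorem five_dvd_sigma3_iff (q : Fin 6 → ℤ) (h : BazaikinFree q) :
    (5 ∣ esymm 3 q) ↔
      ∃ (σ : Equiv.Perm (Fin 6)) (ε δ : ℤ), (ε = 1 ∨ ε = 2) ∧ (δ = 1 ∨ δ = -1) ∧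
        ∀ i : Fin 6, δ * q (σ i) ≡ (if (i : ℕ) < 5 then ε else 0) [ZMOD 5] := by
  rw [five_dvd_esymm_three_iff q h.1, exists_perm_sign_mul_modEq_iff]
  exact sum_pow_three_eq_zero_iff (Fintype.card_fin 6) (h.sum_intCast_eq_zero 5)
    (h.not_intCast_add_eq_zero_and (by decide))
end

section
/- Let q = (q_0, ..., q_5) ∈ ℤ^6 satisfy the Bazaikin freeness condition and the positive curvature condition, and suppose |σ_3(q)| = 40 (i.e. the order s with 8s = |σ_3(q)| equals 5). Then q is, up to reordering the entries and an overall sign change, equal to (−5, 1, 1, 1, 1, 1). (Geometrically: among positively curved Bazaikin spaces, s = 5 occurs only for the Berger space SU(5)/Sp(2)·S^1.) -/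
/-! Since the entries sum to zero, Newton's identities give `∑ qᵢ³ = 3 σ₃(q)`, so
`|∑ qᵢ³| = 120`. After a permutation and a change of sign, `q₀ = -(x₁ + ⋯ + x₅)` where the `xₖ`
are odd with pairwise sums at least `2`, and then `-∑ qᵢ³ = (∑ xₖ)³ - ∑ xₖ³`. Since
`(a + b + c)³ - a³ - b³ - c³ = 3 (a + b) (b + c) (c + a)` and `(s + y)³ - s³ - y³ = 3 s y (s + y)`,
this is a sum of three products, each at least its value at `x = (1, …, 1)`. Hence it is at least
`5³ - 5 = 120`, with equality only at `x = (1, …, 1)`, that is, `q = (-5, 1, 1, 1, 1, 1)`. -/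

open Finset in
theorem sum_pow_three_eq_three_mul_esymm {n : ℕ} (q : Fin n → ℤ) (hq : ∑ i, q i = 0) :
    ∑ i, q i ^ 3 = 3 * esymm 3 q := by
  have newton := congrArg (MvPolynomial.aeval q) (MvPolynomial.mul_esymm_eq_sum (Fin n) ℤ 3)
  rw [show {a ∈ antidiagonal 3 | a.1 < 3} = {(0, 3), (1, 2), (2, 1)} from rfl] at newton
  simpa [MvPolynomial.esymm_one, MvPolynomial.psum, hq, MvPolynomial.esymm, powersetCard_one,
    esymm] using newton.symm

section
variable {R : Type*} [CommRing R] [LinearOrder R] [IsStrictOrderedRing R]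

theorem mul_add_one_add_le_mul_mul_add {m s y : R} (hm : 0 ≤ m) (hs : m ≤ s) (hy : 1 ≤ y) :
    m * (m + 1) + m * (y - 1) ≤ s * y * (s + y) := by
  nlinarith [mul_le_mul_of_nonneg_left hs (zero_le_one.trans hy),
    mul_nonneg hm (sub_nonneg.2 hy)]

theorem eight_add_le_mul_mul {u v w : R} (hu : 2 ≤ u) (hv : 2 ≤ v) (hw : 2 ≤ w) :
    8 + 4 * (u + v + w - 6) ≤ u * v * w := by
  have hu' := sub_nonneg.2 hu; have hv' := sub_nonneg.2 hv; have hw' := sub_nonneg.2 hw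
  nlinarith [mul_nonneg hu' hv', mul_nonneg hv' hw', mul_nonneg hu' hw',
    mul_nonneg (mul_nonneg hu' hv') hw']

theorem le_cube_sum_sub_sum_cubes {a b c d e : R} (hab : 2 ≤ a + b) (hbc : 2 ≤ b + c)
    (hca : 2 ≤ c + a) (hd : 1 ≤ d) (he : 1 ≤ e) :
    120 + 24 * (a + b + c - 3) + 9 * (d - 1) + 12 * (e - 1) ≤
      (a + b + c + d + e) ^ 3 - (a ^ 3 + b ^ 3 + c ^ 3 + d ^ 3 + e ^ 3) := by
  have h₃ := eight_add_le_mul_mul hab hbc hca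
  have h₄ := mul_add_one_add_le_mul_mul_add (m := 3) (s := a + b + c) (by norm_num)
    (by linarith) hd
  have h₅ := mul_add_one_add_le_mul_mul_add (m := 4) (s := a + b + c + d) (by norm_num)
    (by linarith) he
  have hsplit : (a + b + c + d + e) ^ 3 - (a ^ 3 + b ^ 3 + c ^ 3 + d ^ 3 + e ^ 3) =
      3 * ((a + b) * (b + c) * (c + a)) + 3 * ((a + b + c) * d * (a + b + c + d)) +
        3 * ((a + b + c + d) * e * (a + b + c + d + e)) := by ring
  linarith

end

theorem eq_one_of_cube_sum_sub_sum_cubes_le (x : Fin 5 → ℤ)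
    (hx : ∀ i j, i ≠ j → 2 ≤ x i + x j) (h : (∑ i, x i) ^ 3 - ∑ i, x i ^ 3 ≤ 120) :
    ∀ i, x i = 1 := by
  simp only [Fin.sum_univ_five] at h
  have h01 := hx 0 1 (by decide); have h02 := hx 0 2 (by decide); have h03 := hx 0 3 (by decide)
  have h04 := hx 0 4 (by decide); have h12 := hx 1 2 (by decide); have h13 := hx 1 3 (by decide)
  have h14 := hx 1 4 (by decide); have h23 := hx 2 3 (by decide); have h24 := hx 2 4 (by decide)
  have h34 := hx 3 4 (by decide)
  suffices x 0 = 1 ∧ x 1 = 1 ∧ x 2 = 1 ∧ x 3 = 1 ∧ x 4 = 1 by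
    intro i; fin_cases i <;> simp [this]
  -- Two entries `≤ 0` would have sum `< 2`; so if `x 3` or `x 4` is `≤ 0`, then `x 0, x 1 ≥ 1`.
  by_cases h₃₄ : 1 ≤ x 3 ∧ 1 ≤ x 4
  · have hbound := le_cube_sum_sub_sum_cubes h01 h12 (by linarith : 2 ≤ x 2 + x 0) h₃₄.1 h₃₄.2
    omega
  · have hbound := le_cube_sum_sub_sum_cubes h23 h34 (by linarith : 2 ≤ x 4 + x 2)
      (by omega : 1 ≤ x 0) (by omega : 1 ≤ x 1)
    have hperm : (x 2 + x 3 + x 4 + x 0 + x 1) ^ 3 -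
          (x 2 ^ 3 + x 3 ^ 3 + x 4 ^ 3 + x 0 ^ 3 + x 1 ^ 3) =
        (x 0 + x 1 + x 2 + x 3 + x 4) ^ 3 - (x 0 ^ 3 + x 1 ^ 3 + x 2 ^ 3 + x 3 ^ 3 + x 4 ^ 3) := by
      ring
    omega

theorem two_le_add_of_odd {a b : ℤ} (ha : Odd a) (hb : Odd b) (h : 0 < a + b) : 2 ≤ a + b := by
  obtain ⟨k, hk⟩ := ha.add_odd hb
  omega

theorem eq_berger_of_pairwise_pos (p : Fin 6 → ℤ) (hsum : ∑ i, p i = 0) (hodd : ∀ i, Odd (p i))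
    (hpos : ∀ i j : Fin 5, i ≠ j → 0 < p i.succ + p j.succ) (hcube : -120 ≤ ∑ i, p i ^ 3) :
    p = ![-5, 1, 1, 1, 1, 1] := by
  rw [Fin.sum_univ_succ] at hsum hcube
  have hp₀ : p 0 = -∑ i : Fin 5, p i.succ := by linarith
  have hone := eq_one_of_cube_sum_sub_sum_cubes_le (fun i => p i.succ)
    (fun i j hij => two_le_add_of_odd (hodd _) (hodd _) (hpos i j hij))
    (by rw [hp₀, neg_pow, Odd.neg_one_pow (by decide)] at hcube; linarith)
  have hp₀_eq : p 0 = -5 := by simp [hp₀, hone]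
  ext i
  refine Fin.cases ?_ (fun i => ?_) i
  · simpa using hp₀_eq
  · rw [hone i]; fin_cases i <;> rfl

theorem PosCurv.exists_sign {q : Fin 6 → ℤ} (hq : PosCurv q) :
    ∃ i₀ : Fin 6, ∃ ε : ℤ, (ε = 1 ∨ ε = -1) ∧
      ∀ i j, i ≠ j → i ≠ i₀ → j ≠ i₀ → 0 < ε * (q i + q j) := by
  obtain ⟨i₀, hq⟩ := hq
  have of_lt : ∀ ε : ℤ, (∀ i j, i < j → i ≠ i₀ → j ≠ i₀ → 0 < ε * (q i + q j)) →
      ∀ i j, i ≠ j → i ≠ i₀ → j ≠ i₀ → 0 < ε * (q i + q j) := by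
    intro ε h i j hij hi hj
    rcases hij.lt_or_gt with hij | hji
    · exact h i j hij hi hj
    · rw [add_comm]; exact h j i hji hj hi
  rcases hq with hq | hq
  · exact ⟨i₀, 1, .inl rfl, of_lt 1 fun i j hij hi hj => by linarith [hq i j hij hi hj]⟩
  · exact ⟨i₀, -1, .inr rfl, of_lt (-1) fun i j hij hi hj => by linarith [hq i j hij hi hj]⟩

theorem posCurved_order_five_is_Berger (q : Fin 6 → ℤ) (h : BazaikinFree q)
    (hpos : PosCurv q) (hs : |esymm 3 q| = 40) :
    ∃ (σ : Equiv.Perm (Fin 6)) (ε : ℤ), (ε = 1 ∨ ε = -1) ∧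
      ∀ i : Fin 6, ε * q (σ i) = (![-5, 1, 1, 1, 1, 1] : Fin 6 → ℤ) i := by
  obtain ⟨hsum, hodd, -⟩ := h
  obtain ⟨i₀, ε, hε, hpos⟩ := hpos.exists_sign
  set σ := Equiv.swap 0 i₀
  have hσ : ∀ i : Fin 5, σ i.succ ≠ i₀ := fun i h =>
    i.succ_ne_zero (by rw [Equiv.swap_apply_eq_iff, Equiv.swap_apply_right] at h; exact h)
  have hcube : ∑ i, (ε * q (σ i)) ^ 3 = ε ^ 3 * (3 * esymm 3 q) := by
    simp_rw [mul_pow, ← Finset.mul_sum, Equiv.sum_comp σ (fun i => q i ^ 3),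
      sum_pow_three_eq_three_mul_esymm q hsum]
  refine ⟨σ, ε, hε, congrFun (eq_berger_of_pairwise_pos (fun i => ε * q (σ i)) ?_ ?_ ?_ ?_)⟩
  · rw [← Finset.mul_sum, Equiv.sum_comp σ q, hsum, mul_zero]
  · intro i
    rcases hε with rfl | rfl <;> simpa using hodd _
  · intro i j hij
    rw [← mul_add]
    exact hpos _ _ (σ.injective.ne (Fin.succ_injective _ |>.ne hij)) (hσ i) (hσ j)
  · rw [hcube]
    obtain ⟨hlo, hhi⟩ := abs_le.mp hs.le
    rcases hε with rfl | rfl <;> norm_num <;> linarith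
end
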